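/- arXiv:1006.0535 — 8 statements merged into one kernel-verified Lean document; each statement's English description precedes it below -/
import Mathlib

section
/- Let B be a one-dimensional standard Brownian motion and ρ : [0,∞) → ℝ a right-continuous function. Then the process B^{(ρ)}_t = B_t + ρ(t) satisfies: t ↦ P(B_t + ρ(t) ≥ x) is increasing on (0,∞) for every x ≥ 0 if and only if t ↦ ρ(t)/√t is increasing on (0,∞). -/
open MeasureTheory ProbabilityTheory Set

lemma gaussianReal_Ici_pos_measure {a b : ℝ} (hab : a < b) :
    0 < gaussianReal 0 1 (Ico a b) := by
  by_contra h
  push_neg at h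
  have h0 : gaussianReal 0 1 (Ico a b) = 0 := le_antisymm h zero_le
  have := gaussianReal_absolutelyContinuous' 0 (v := 1) one_ne_zero h0
  rw [Real.volume_Ico] at this
  simp only [ENNReal.ofReal_eq_zero, sub_nonpos] at this
  linarith

lemma gaussianReal_Ici_le_iff {a b : ℝ} :
    gaussianReal 0 1 (Ici a) ≤ gaussianReal 0 1 (Ici b) ↔ b ≤ a := by
  constructor
  · intro h
    by_contra hba
    push_neg at hba
    have hsplit : Ico a b ∪ Ici b = Ici a := Ico_union_Ici_eq_Ici hba.le
    have hdisj : Disjoint (Ico a b) (Ici b) := by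
      rw [Set.disjoint_left]
      rintro x ⟨_, hx⟩ hx'
      exact absurd hx' (not_le.mpr hx)
    have : gaussianReal 0 1 (Ici a) = gaussianReal 0 1 (Ico a b) + gaussianReal 0 1 (Ici b) := by
      rw [← hsplit, measure_union hdisj measurableSet_Ici]
    have hpos := gaussianReal_Ici_pos_measure hba
    have hfin : gaussianReal 0 1 (Ici b) ≠ ⊤ := measure_ne_top _ _
    have hlt : gaussianReal 0 1 (Ici b) < gaussianReal 0 1 (Ici a) := by
      rw [this, add_comm]
      exact ENNReal.lt_add_right hfin hpos.ne'
    exact absurd h hlt.not_ge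
  · intro h
    exact measure_mono (Ici_subset_Ici.mpr h)

lemma gaussianReal_Ici_eq {t : ℝ} (ht : 0 < t) (a : ℝ) :
    gaussianReal 0 (Real.toNNReal t) (Ici a) = gaussianReal 0 1 (Ici (a / Real.sqrt t)) := by
  have hst : (0:ℝ) < Real.sqrt t := Real.sqrt_pos.mpr ht
  have hmap : (gaussianReal 0 1).map (Real.sqrt t * ·) = gaussianReal 0 (Real.toNNReal t) := by
    rw [gaussianReal_map_const_mul]
    congr 1
    · ring
    · ext
      simp [Real.sq_sqrt ht.le, Real.toNNReal, max_eq_left ht.le]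
  rw [← hmap, Measure.map_apply (by fun_prop) measurableSet_Ici]
  congr 1
  ext y
  simp only [mem_preimage, mem_Ici]
  rw [mul_comm, ← div_le_iff₀ hst]

/-- `B_t + ρ(t)` is d-increasing on `[0,∞)` iff `ρ(t)/√t` is increasing on `(0,∞)`. -/
theorem bm_functional_drift_d_increasing_iff
    {Ω : Type*} [MeasurableSpace Ω] (P : Measure Ω) [IsProbabilityMeasure P]
    (B : ℝ → Ω → ℝ) (hmB : ∀ t, Measurable (B t))
    (hB : ∀ t > (0 : ℝ), Measure.map (B t) P = gaussianReal 0 (Real.toNNReal t))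
    (ρ : ℝ → ℝ)
    (hρ_rc : ∀ t ≥ (0 : ℝ), ContinuousWithinAt ρ (Ici t) t) :
    (∀ x ≥ (0 : ℝ), MonotoneOn (fun t => P {ω | x ≤ B t ω + ρ t}) (Ioi (0 : ℝ))) ↔
    MonotoneOn (fun t => ρ t / Real.sqrt t) (Ioi (0 : ℝ)) := by
  have key : ∀ x : ℝ, ∀ t > (0:ℝ), P {ω | x ≤ B t ω + ρ t}
      = gaussianReal 0 1 (Ici ((x - ρ t) / Real.sqrt t)) := by
    intro x t ht
    have : {ω | x ≤ B t ω + ρ t} = (B t) ⁻¹' (Ici (x - ρ t)) := by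
      ext ω; simp [mem_Ici, sub_le_iff_le_add]
    rw [this, ← Measure.map_apply (hmB t) measurableSet_Ici, hB t ht,
      gaussianReal_Ici_eq ht]
  constructor
  · intro h s hs t ht hst
    have h0 := h 0 le_rfl hs ht hst
    simp only at h0
    rw [key 0 s hs, key 0 t ht, gaussianReal_Ici_le_iff] at h0
    have hss : (0:ℝ) < Real.sqrt s := Real.sqrt_pos.mpr hs
    have hts : (0:ℝ) < Real.sqrt t := Real.sqrt_pos.mpr ht
    rw [zero_sub, zero_sub, neg_div, neg_div] at h0
    linarith
  · intro h x hx s hs t ht hst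
    simp only
    rw [key x s hs, key x t ht, gaussianReal_Ici_le_iff]
    have hss : (0:ℝ) < Real.sqrt s := Real.sqrt_pos.mpr hs
    have hts : (0:ℝ) < Real.sqrt t := Real.sqrt_pos.mpr ht
    have h1 : ρ s / Real.sqrt s ≤ ρ t / Real.sqrt t := h hs ht hst
    calc (x - ρ t) / Real.sqrt t = x / Real.sqrt t - ρ t / Real.sqrt t := by ring
      _ ≤ x / Real.sqrt s - ρ s / Real.sqrt s := by
          have h2 : x / Real.sqrt t ≤ x / Real.sqrt s := by
            gcongr
          linarith
      _ = (x - ρ s) / Real.sqrt s := by ring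
end

section
/- Let B be standard Brownian motion and ρ : [0,∞) → ℝ right-continuous with ρ(t)/√t increasing in t > 0. For x ≥ 0 define η_x(t) = (ρ(t) − x)/√t on (0,∞). Then for all t > 0, P(B_t + ρ(t) ≥ x) = P(η_x^{-1}(B_1) ≤ t), where η_x^{-1} is the left-continuous inverse of η_x; i.e., η_x^{-1}(B_1) is a d-inverse of B^{(ρ)} at level x. -/
open MeasureTheory ProbabilityTheory Set ENNReal

lemma gauss_Ici_eq_Iic (t : ℝ) (ht : 0 < t) (a : ℝ) :
    gaussianReal 0 (Real.toNNReal t) (Ici a) = gaussianReal 0 1 (Iic (-a / Real.sqrt t)) := by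
  have hst : (0:ℝ) < Real.sqrt t := Real.sqrt_pos.mpr ht
  have h1 : (gaussianReal 0 1).map (Real.sqrt t * ·) = gaussianReal 0 (Real.toNNReal t) := by
    rw [gaussianReal_map_const_mul]
    congr 1
    · ring
    · ext
      push_cast
      simp [Real.sq_sqrt ht.le, Real.coe_toNNReal _ ht.le]
  have h2 : (gaussianReal 0 1).map ((-1 : ℝ) * ·) = gaussianReal 0 1 := by
    rw [gaussianReal_map_const_mul]
    congr 1
    · ring
    · ext; push_cast; norm_num
  have hpre1 : (Real.sqrt t * ·) ⁻¹' (Ici a) = Ici (a / Real.sqrt t) := by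
    ext y
    simp only [mem_preimage, mem_Ici]
    rw [div_le_iff₀ hst]
    constructor <;> intro h <;> linarith [h]
  have hpre2 : ((-1 : ℝ) * ·) ⁻¹' (Ici (a / Real.sqrt t)) = Iic (-a / Real.sqrt t) := by
    ext y
    simp only [mem_preimage, mem_Ici, mem_Iic, neg_div]
    constructor <;> intro h <;> linarith
  calc gaussianReal 0 (Real.toNNReal t) (Ici a)
      = (gaussianReal 0 1).map (Real.sqrt t * ·) (Ici a) := by rw [h1]
    _ = gaussianReal 0 1 (Ici (a / Real.sqrt t)) := by
        rw [Measure.map_apply (by fun_prop) measurableSet_Ici, hpre1]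
    _ = (gaussianReal 0 1).map ((-1 : ℝ) * ·) (Ici (a / Real.sqrt t)) := by rw [h2]
    _ = gaussianReal 0 1 (Iic (-a / Real.sqrt t)) := by
        rw [Measure.map_apply (by fun_prop) measurableSet_Ici, hpre2]

/-- For `ρ` right-continuous with `ρ(t)/√t` increasing, the d-inverse of `B_t + ρ(t)`
at level `x ≥ 0` is `η_x⁻¹(B₁)`, where `η_x(t) = (ρ(t)-x)/√t` and `η_x⁻¹` is the
left-continuous inverse. -/
theorem d_inverse_of_bm_functional_drift
    {Ω : Type*} [MeasurableSpace Ω] (P : Measure Ω) [IsProbabilityMeasure P]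
    (B : ℝ → Ω → ℝ) (hmB : ∀ t, Measurable (B t))
    (hB : ∀ t > (0 : ℝ), Measure.map (B t) P = gaussianReal 0 (Real.toNNReal t))
    (ρ : ℝ → ℝ)
    (hρ_rc : ∀ t ≥ (0 : ℝ), ContinuousWithinAt ρ (Ici t) t)
    (hρ_mono : MonotoneOn (fun t => ρ t / Real.sqrt t) (Ioi (0 : ℝ)))
    (x : ℝ) (hx : 0 ≤ x)
    (ηinv : ℝ → ℝ≥0∞)
    (hηinv : ∀ y, ηinv y =
      sInf (ENNReal.ofReal '' {t | 0 < t ∧ y ≤ (ρ t - x) / Real.sqrt t})) :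
    ∀ t > (0 : ℝ),
      P {ω | x ≤ B t ω + ρ t} = P {ω | ηinv (B 1 ω) ≤ ENNReal.ofReal t} := by
  intro t ht
  set η : ℝ → ℝ := fun s => (ρ s - x) / Real.sqrt s with hη
  -- monotonicity of η on Ioi 0
  have hη_mono : MonotoneOn η (Ioi (0:ℝ)) := by
    intro a ha b hb hab
    have ha' : (0:ℝ) < a := ha
    have hb' : (0:ℝ) < b := hb
    have h1 : ρ a / Real.sqrt a ≤ ρ b / Real.sqrt b := hρ_mono ha hb hab
    have h2 : x / Real.sqrt b ≤ x / Real.sqrt a :=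
      div_le_div_of_nonneg_left hx (Real.sqrt_pos.mpr ha') (Real.sqrt_le_sqrt hab)
    simp only [hη, sub_div]
    linarith
  -- right continuity of η at t
  have hη_rc : ContinuousWithinAt η (Ici t) t := by
    have h1 : ContinuousWithinAt (fun s => ρ s - x) (Ici t) t :=
      (hρ_rc t ht.le).sub continuousWithinAt_const
    have h2 : ContinuousWithinAt Real.sqrt (Ici t) t :=
      Real.continuous_sqrt.continuousWithinAt
    exact h1.div h2 (by positivity)
  -- key set equality
  have hset : ∀ y : ℝ, ηinv y ≤ ENNReal.ofReal t ↔ y ≤ η t := by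
    intro y
    rw [hηinv y]
    constructor
    · intro h
      -- y ≤ η s for all s > t
      have key : ∀ s, t < s → y ≤ η s := by
        intro s hs
        have hlt : sInf (ENNReal.ofReal '' {u | 0 < u ∧ y ≤ η u}) < ENNReal.ofReal s :=
          lt_of_le_of_lt h ((ENNReal.ofReal_lt_ofReal_iff (ht.trans hs)).2 hs)
        obtain ⟨a, ⟨u, ⟨hu0, hyu⟩, rfl⟩, halt⟩ := sInf_lt_iff.mp hlt
        have hus : u < s := (ENNReal.ofReal_lt_ofReal_iff (ht.trans hs)).1 halt
        exact hyu.trans (hη_mono hu0 (ht.trans hs) hus.le)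
      have htend : Filter.Tendsto η (nhdsWithin t (Ioi t)) (nhds (η t)) :=
        hη_rc.tendsto.mono_left (nhdsWithin_mono t Ioi_subset_Ici_self)
      exact ge_of_tendsto htend (Filter.eventually_of_mem self_mem_nhdsWithin
        fun s hs => key s hs)
    · intro h
      exact sInf_le ⟨t, ⟨ht, h⟩, rfl⟩
  -- rewrite both sides as preimages
  have hset1 : {ω | x ≤ B t ω + ρ t} = B t ⁻¹' (Ici (x - ρ t)) := by
    ext ω; simp only [mem_setOf_eq, mem_preimage, mem_Ici]
    constructor <;> intro <;> linarith
  have hset2 : {ω | ηinv (B 1 ω) ≤ ENNReal.ofReal t} = B 1 ⁻¹' (Iic (η t)) := by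
    ext ω; simp only [mem_setOf_eq, mem_preimage, mem_Iic, hset]
  rw [hset1, hset2,
    ← Measure.map_apply (hmB t) measurableSet_Ici,
    ← Measure.map_apply (hmB 1) measurableSet_Iic,
    hB t ht, hB 1 one_pos, gauss_Ici_eq_Iic t ht]
  norm_num [hη, neg_sub]
end

section
/- Let G be a standard Gaussian random variable and c > 0, x ≥ 0. Define Y^{(c·)}_x = ((G + √(G² + 4cx))/(2c))². Then for all t > 0, P(B_t + ct ≥ x) = P(Y^{(c·)}_x ≤ t), where B is standard Brownian motion; i.e., Y^{(c·)}_x is a d-inverse at level x of Brownian motion with constant drift c. -/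
open MeasureTheory ProbabilityTheory Set

lemma key_iff (c x t g : ℝ) (hc : 0 < c) (hx : 0 ≤ x) (ht : 0 < t) :
    ((g + Real.sqrt (g ^ 2 + 4 * c * x)) / (2 * c)) ^ 2 ≤ t ↔
      x ≤ c * t - Real.sqrt t * g := by
  have hs : 0 ≤ Real.sqrt (g ^ 2 + 4 * c * x) := Real.sqrt_nonneg _
  have hssq : Real.sqrt (g ^ 2 + 4 * c * x) ^ 2 = g ^ 2 + 4 * c * x :=
    Real.sq_sqrt (by nlinarith)
  have hgs : -g ≤ Real.sqrt (g ^ 2 + 4 * c * x) := by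
    nlinarith [abs_nonneg g, sq_abs g, neg_abs_le g,
      Real.sqrt_le_sqrt (show g ^ 2 ≤ g ^ 2 + 4 * c * x by nlinarith),
      Real.sqrt_sq_eq_abs g]
  have hA : 0 ≤ (g + Real.sqrt (g ^ 2 + 4 * c * x)) / (2 * c) :=
    div_nonneg (by linarith) (by linarith)
  have hst : 0 ≤ Real.sqrt t := Real.sqrt_nonneg t
  have hstsq : Real.sqrt t ^ 2 = t := Real.sq_sqrt ht.le
  have hexp : (2 * c * Real.sqrt t - g) ^ 2 = 4 * c ^ 2 * t - 4 * c * (Real.sqrt t * g) + g ^ 2 := by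
    linear_combination (4 * c ^ 2 : ℝ) * hstsq
  constructor
  · intro h
    have h2 : (g + Real.sqrt (g ^ 2 + 4 * c * x)) / (2 * c) ≤ Real.sqrt t := by
      nlinarith [sq_nonneg ((g + Real.sqrt (g ^ 2 + 4 * c * x)) / (2 * c) - Real.sqrt t)]
    have h3 : g + Real.sqrt (g ^ 2 + 4 * c * x) ≤ 2 * c * Real.sqrt t := by
      rw [div_le_iff₀ (by linarith)] at h2; linarith
    have h4 : g ^ 2 + 4 * c * x ≤ (2 * c * Real.sqrt t - g) ^ 2 := by
      have := pow_le_pow_left₀ hs (show Real.sqrt (g ^ 2 + 4 * c * x) ≤ 2 * c * Real.sqrt t - g by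
        linarith) 2
      linarith [hssq ▸ this]
    nlinarith [h4, hexp]
  · intro h
    have hcase : Real.sqrt (g ^ 2 + 4 * c * x) ≤ 2 * c * Real.sqrt t - g := by
      have hrhs : 0 ≤ 2 * c * Real.sqrt t - g := by nlinarith
      nlinarith [Real.sqrt_le_sqrt (show g ^ 2 + 4 * c * x ≤ (2 * c * Real.sqrt t - g) ^ 2 by
        nlinarith [mul_le_mul_of_nonneg_left h (show (0:ℝ) ≤ 4 * c by linarith), hexp]),
        Real.sqrt_sq_eq_abs (2 * c * Real.sqrt t - g), abs_of_nonneg hrhs]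
    have h2 : (g + Real.sqrt (g ^ 2 + 4 * c * x)) / (2 * c) ≤ Real.sqrt t := by
      rw [div_le_iff₀ (by linarith)]; linarith
    nlinarith

/-- d-inverse of Brownian motion with constant drift `c > 0`:
`Y_x = ((G + √(G² + 4cx))/(2c))²` satisfies `P(B_t + ct ≥ x) = P(Y_x ≤ t)`. -/
theorem d_inverse_of_bm_constant_drift
    {Ω : Type*} [MeasurableSpace Ω] (P : Measure Ω) [IsProbabilityMeasure P]
    (B : ℝ → Ω → ℝ) (hmB : ∀ t, Measurable (B t))
    (hB : ∀ t > (0 : ℝ), Measure.map (B t) P = gaussianReal 0 (Real.toNNReal t))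
    (c : ℝ) (hc : 0 < c) (x : ℝ) (hx : 0 ≤ x)
    (Y : Ω → ℝ)
    (hY : ∀ ω, Y ω =
      ((B 1 ω + Real.sqrt ((B 1 ω) ^ 2 + 4 * c * x)) / (2 * c)) ^ 2) :
    ∀ t > (0 : ℝ), P {ω | x ≤ B t ω + c * t} = P {ω | Y ω ≤ t} := by
  intro t ht
  have hms : MeasurableSet {y : ℝ | x ≤ y + c * t} :=
    measurableSet_le measurable_const (by fun_prop)
  have hms2 : MeasurableSet {g : ℝ | x ≤ c * t - Real.sqrt t * g} :=
    measurableSet_le measurable_const (by fun_prop)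
  -- LHS
  have hL : P {ω | x ≤ B t ω + c * t} = gaussianReal 0 (Real.toNNReal t) {y | x ≤ y + c * t} := by
    rw [← hB t ht, Measure.map_apply (hmB t) hms]; rfl
  -- scaling
  have hscale : gaussianReal 0 (Real.toNNReal t) {y | x ≤ y + c * t}
      = gaussianReal 0 1 {g | x ≤ c * t - Real.sqrt t * g} := by
    have h1 : (gaussianReal 0 1).map ((-Real.sqrt t) * ·)
        = gaussianReal 0 (Real.toNNReal t) := by
      rw [gaussianReal_map_const_mul]
      congr 1
      · simp
      · ext
        simp [Real.sq_sqrt ht.le, Real.coe_toNNReal _ ht.le]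
    rw [← h1, Measure.map_apply (by fun_prop) hms]
    congr 1
    ext g
    simp only [Set.mem_preimage, Set.mem_setOf_eq]
    constructor <;> intro h <;> linarith
  -- RHS
  have hR : P {ω | Y ω ≤ t} = gaussianReal 0 1 {g | x ≤ c * t - Real.sqrt t * g} := by
    have hset : {ω | Y ω ≤ t} = (B 1) ⁻¹' {g | x ≤ c * t - Real.sqrt t * g} := by
      ext ω
      simp only [Set.mem_setOf_eq, Set.mem_preimage, hY ω]
      exact key_iff c x t (B 1 ω) hc hx ht
    rw [hset, ← Measure.map_apply (hmB 1) hms2, hB 1 one_pos]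
    norm_num
  rw [hL, hscale, hR]
end

section
/- Let B be standard Brownian motion and for c ≥ 0, x ≥ 0 let Y^{(c·)}_x denote the d-inverse of Brownian motion with drift c at level x, characterized by P(B_t + ct ≥ x) = P(Y^{(c·)}_x ≤ t) for all t > 0. Then Y^{(c·)}_x has the same distribution as 1/Y^{(x·)}_c for all c ≥ 0 and x ≥ 0 (with the convention 1/∞ = 0, 1/0 = ∞). -/
open MeasureTheory ProbabilityTheory Set ENNReal

open Filter in
lemma gauss_key {Ω : Type*} [MeasurableSpace Ω] (P : Measure Ω) [IsProbabilityMeasure P]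
    (B : ℝ → Ω → ℝ) (hmB : ∀ t, Measurable (B t))
    (hB : ∀ t > (0 : ℝ), Measure.map (B t) P = gaussianReal 0 (Real.toNNReal t))
    (c x t : ℝ) (ht : 0 < t) :
    P {ω | x ≤ B t ω + c * t} + P {ω | c ≤ B (1/t) ω + x * (1/t)} = 1 := by
  have ht' : (0:ℝ) < 1/t := by positivity
  have hvne : Real.toNNReal t ≠ 0 := ne_of_gt (Real.toNNReal_pos.mpr ht)
  have hA : P {ω | x ≤ B t ω + c * t} = (gaussianReal 0 t.toNNReal) (Ici (x - c*t)) := by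
    rw [← hB t ht, Measure.map_apply (hmB t) measurableSet_Ici]
    congr 1; ext ω; simp only [mem_setOf_eq, mem_preimage, mem_Ici]
    constructor <;> intro h <;> linarith
  have hmap : gaussianReal 0 (1/t).toNNReal
      = (gaussianReal 0 t.toNNReal).map (fun y => (-(1/t)) * y) := by
    rw [gaussianReal_map_const_mul]
    congr 1
    · ring
    · ext
      push_cast
      rw [Real.coe_toNNReal _ ht.le, Real.coe_toNNReal _ ht'.le]
      field_simp
  have hBmeas : Measurable (fun y : ℝ => (-(1/t)) * y) := measurable_const_mul _
  have hpre : (fun y : ℝ => (-(1/t)) * y) ⁻¹' (Ici (c - x*(1/t))) = Iic (x - c*t) := by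
    ext y
    simp only [mem_preimage, mem_Ici, mem_Iic]
    constructor <;> intro h
    · have h2 := mul_le_mul_of_nonneg_right h ht.le
      have h3 : (c - x*(1/t))*t = c*t - x := by field_simp
      have h4 : ((-(1/t))*y)*t = -y := by field_simp
      rw [h3, h4] at h2
      linarith
    · have h2 : c*t - x ≤ -y := by linarith
      have h5 := mul_le_mul_of_nonneg_right h2 ht'.le
      have h3 : (c*t - x)*(1/t) = c - x*(1/t) := by field_simp
      have h4 : (-y)*(1/t) = (-(1/t))*y := by ring
      rw [h3, h4] at h5
      exact h5
  have hC : P {ω | c ≤ B (1/t) ω + x * (1/t)} = (gaussianReal 0 t.toNNReal) (Iic (x - c*t)) := by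
    have e1 : P {ω | c ≤ B (1/t) ω + x * (1/t)}
        = (gaussianReal 0 (1/t).toNNReal) (Ici (c - x*(1/t))) := by
      rw [← hB (1/t) ht', Measure.map_apply (hmB (1/t)) measurableSet_Ici]
      congr 1; ext ω; simp only [mem_setOf_eq, mem_preimage, mem_Ici]
      constructor <;> intro h <;> linarith
    rw [e1, hmap, Measure.map_apply hBmeas measurableSet_Ici, hpre]
  rw [hA, hC]
  have hsing : (gaussianReal 0 t.toNNReal) {x - c*t} = 0 :=
    gaussianReal_absolutelyContinuous 0 hvne (measure_singleton _)
  have hkey := measure_union_add_inter (μ := gaussianReal 0 t.toNNReal)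
    (Ici (x - c*t)) (measurableSet_Iic (a := x - c*t))
  have h1 : Ici (x - c*t) ∪ Iic (x - c*t) = univ := by
    rw [union_comm, Iic_union_Ici]
  have h2 : Ici (x - c*t) ∩ Iic (x - c*t) = {x - c*t} := by
    rw [inter_comm, Iic_inter_Ici, Icc_self]
  rw [h1, h2, measure_univ, hsing] at hkey
  simpa using hkey.symm


-- main positive case
open Filter in
lemma pos_case {Ω : Type*} [MeasurableSpace Ω] (P : Measure Ω) [IsProbabilityMeasure P]
    (Ycx Yxc : Ω → ℝ≥0∞) (hmYcx : Measurable Ycx) (hmYxc : Measurable Yxc)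
    (key : ∀ t : ℝ, 0 < t →
      P {ω | Ycx ω ≤ ENNReal.ofReal t} + P {ω | Yxc ω ≤ ENNReal.ofReal (1/t)} = 1)
    (t : ℝ) (ht : 0 < t) :
    (Measure.map Ycx P) (Iic (ENNReal.ofReal t))
      = (Measure.map (fun ω => (Yxc ω)⁻¹) P) (Iic (ENNReal.ofReal t)) := by
  rw [Measure.map_apply hmYcx measurableSet_Iic,
      Measure.map_apply (f := fun ω => (Yxc ω)⁻¹) hmYxc.inv measurableSet_Iic]
  have hset : (fun ω => (Yxc ω)⁻¹) ⁻¹' (Iic (ENNReal.ofReal t))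
      = {ω | Yxc ω < ENNReal.ofReal (1/t)}ᶜ := by
    ext ω
    simp only [mem_preimage, mem_Iic, mem_compl_iff, mem_setOf_eq, not_lt]
    rw [ENNReal.inv_le_iff_inv_le, one_div, ENNReal.ofReal_inv_of_pos ht]
  rw [hset, prob_compl_eq_one_sub (measurableSet_lt hmYxc measurable_const)]
  -- sequences
  set u : ℕ → ℝ := fun n => 1/t - (1/t) * (1/(n+2)) with hu
  have hn2 : ∀ n : ℕ, (0:ℝ) < (n:ℝ) + 2 := fun n => by positivity
  have hupos : ∀ n, 0 < u n := by
    intro n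
    have h1 : (1:ℝ)/((n:ℝ)+2) < 1 := by
      rw [div_lt_one (hn2 n)]
      have := Nat.cast_nonneg (α := ℝ) n
      linarith
    have h2 : (0:ℝ) < 1/t := by positivity
    simp only [hu]
    nlinarith
  have hult : ∀ n, u n < 1/t := by
    intro n
    have h2 : (0:ℝ) < 1/t := by positivity
    have h3 : (0:ℝ) < 1/((n:ℝ)+2) := by positivity
    simp only [hu]
    nlinarith
  have humono : Monotone u := by
    intro n m hnm
    have h2 : (0:ℝ) ≤ 1/t := by positivity
    have h3 : (1:ℝ)/((m:ℝ)+2) ≤ 1/((n:ℝ)+2) := by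
      apply one_div_le_one_div_of_le (hn2 n)
      have := (Nat.cast_le (α := ℝ)).mpr hnm
      linarith
    simp only [hu]
    nlinarith
  have hulim : Tendsto u atTop (nhds (1/t)) := by
    have h0 : Tendsto (fun n : ℕ => 1/((n:ℝ)+2)) atTop (nhds 0) := by
      have := (tendsto_one_div_add_atTop_nhds_zero_nat (𝕜 := ℝ)).comp (tendsto_add_atTop_nat 1)
      convert this using 2 with n
      simp only [Function.comp_apply]
      push_cast
      ring_nf
    have h1 := (tendsto_const_nhds (x := 1/t) (f := atTop (α := ℕ))).sub
      ((tendsto_const_nhds (x := 1/t) (f := atTop (α := ℕ))).mul h0)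
    simp only [hu, one_div]
    simp only [one_div] at h1
    simpa using h1
  have hulim' : Tendsto (fun n => 1/(u n)) atTop (nhds t) := by
    have := hulim.inv₀ (by positivity : (1:ℝ)/t ≠ 0)
    simp only [one_div] at this ⊢
    simpa using this
  have hsup : ⨆ n, ENNReal.ofReal (u n) = ENNReal.ofReal (1/t) :=
    tendsto_nhds_unique
      (tendsto_atTop_iSup (fun n m h => ENNReal.ofReal_le_ofReal (humono h)))
      (ENNReal.tendsto_ofReal hulim)
  have huanti : Antitone (fun n => ENNReal.ofReal (1/(u n))) := by
    intro n m h
    exact ENNReal.ofReal_le_ofReal (one_div_le_one_div_of_le (hupos n) (humono h))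
  have hinf : ⨅ n, ENNReal.ofReal (1/(u n)) = ENNReal.ofReal t :=
    tendsto_nhds_unique (tendsto_atTop_iInf huanti) (ENNReal.tendsto_ofReal hulim')
  -- union decomposition
  have hU : {ω | Yxc ω < ENNReal.ofReal (1/t)}
      = ⋃ n, {ω | Yxc ω ≤ ENNReal.ofReal (u n)} := by
    ext ω
    simp only [mem_setOf_eq, mem_iUnion]
    constructor
    · intro h
      rw [← hsup] at h
      obtain ⟨n, hn⟩ := lt_iSup_iff.mp h
      exact ⟨n, hn.le⟩
    · rintro ⟨n, hn⟩
      refine hn.trans_lt ?_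
      rw [ENNReal.ofReal_lt_ofReal_iff (by positivity)]
      exact hult n
  have hI : {ω | Ycx ω ≤ ENNReal.ofReal t}
      = ⋂ n, {ω | Ycx ω ≤ ENNReal.ofReal (1/(u n))} := by
    ext ω
    simp only [mem_setOf_eq, mem_iInter]
    constructor
    · intro h n
      refine h.trans (ENNReal.ofReal_le_ofReal ?_)
      have := one_div_le_one_div_of_le (hupos n) (hult n).le
      rwa [one_div_one_div] at this
    · intro h
      have := le_iInf h
      rwa [hinf] at this
  have hunion : P {ω | Yxc ω < ENNReal.ofReal (1/t)}
      = ⨆ n, P {ω | Yxc ω ≤ ENNReal.ofReal (u n)} := by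
    rw [hU]
    have hSmono : Monotone (fun n => {ω | Yxc ω ≤ ENNReal.ofReal (u n)}) :=
      fun n m h ω hω => le_trans hω (ENNReal.ofReal_le_ofReal (humono h))
    exact Directed.measure_iUnion hSmono.directed_le
  have hGn : ∀ n, P {ω | Yxc ω ≤ ENNReal.ofReal (u n)}
      = 1 - P {ω | Ycx ω ≤ ENNReal.ofReal (1/(u n))} := by
    intro n
    have hk := key (1/(u n)) (by have := hupos n; positivity)
    rw [one_div_one_div] at hk
    rw [add_comm] at hk
    exact ENNReal.eq_sub_of_add_eq (measure_ne_top P _) hk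
  have hiInf : ⨅ n, P {ω | Ycx ω ≤ ENNReal.ofReal (1/(u n))}
      = P {ω | Ycx ω ≤ ENNReal.ofReal t} := by
    rw [hI]
    refine (Directed.measure_iInter (fun n => ?_) ?_ ⟨0, measure_ne_top P _⟩).symm
    · exact (measurableSet_le hmYcx measurable_const).nullMeasurableSet
    · have hSanti : Antitone (fun n => {ω | Ycx ω ≤ ENNReal.ofReal (1/(u n))}) :=
        fun n m h ω hω => le_trans hω (huanti h)
      exact hSanti.directed_ge
  rw [hunion]
  simp only [hGn]
  rw [← ENNReal.sub_iInf, hiInf,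
    ENNReal.sub_sub_cancel ENNReal.one_ne_top (prob_le_one)]
  rfl

/-- Time-inversion identity for d-inverses of Brownian motion with constant drift:
if `Y^{(c·)}_x` and `Y^{(x·)}_c` are d-inverses at level `x` of `B_t + ct` and at
level `c` of `B_t + xt` respectively, then `Y^{(c·)}_x =ᵈ 1 / Y^{(x·)}_c`
(with `1/∞ = 0`, `1/0 = ∞` in `ℝ≥0∞`). -/
theorem d_inverse_time_inversion
    {Ω : Type*} [MeasurableSpace Ω] (P : Measure Ω) [IsProbabilityMeasure P]
    (B : ℝ → Ω → ℝ) (hmB : ∀ t, Measurable (B t))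
    (hB : ∀ t > (0 : ℝ), Measure.map (B t) P = gaussianReal 0 (Real.toNNReal t))
    (c x : ℝ) (hc : 0 ≤ c) (hx : 0 ≤ x)
    (Ycx Yxc : Ω → ℝ≥0∞) (hmYcx : Measurable Ycx) (hmYxc : Measurable Yxc)
    (hYcx : ∀ t > (0 : ℝ), P {ω | x ≤ B t ω + c * t} = P {ω | Ycx ω ≤ ENNReal.ofReal t})
    (hYxc : ∀ t > (0 : ℝ), P {ω | c ≤ B t ω + x * t} = P {ω | Yxc ω ≤ ENNReal.ofReal t}) :
    Measure.map Ycx P = Measure.map (fun ω => (Yxc ω)⁻¹) P := by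
  have key : ∀ t : ℝ, 0 < t →
      P {ω | Ycx ω ≤ ENNReal.ofReal t} + P {ω | Yxc ω ≤ ENNReal.ofReal (1/t)} = 1 := by
    intro t ht
    rw [← hYcx t ht, ← hYxc (1/t) (by positivity)]
    exact gauss_key P B hmB hB c x t ht
  have main := pos_case P Ycx Yxc hmYcx hmYxc key
  have hP1 : IsProbabilityMeasure (Measure.map Ycx P) :=
    Measure.isProbabilityMeasure_map hmYcx.aemeasurable
  have hP2 : IsProbabilityMeasure (Measure.map (fun ω => (Yxc ω)⁻¹) P) :=
    Measure.isProbabilityMeasure_map hmYxc.inv.aemeasurable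
  refine Measure.ext_of_Iic _ _ (fun a => ?_)
  by_cases hta : a = ⊤
  · rw [hta, Iic_top, measure_univ, measure_univ]
  by_cases h0a : a = 0
  · -- Iic 0 as an intersection
    have hinf0 : ⨅ n : ℕ, ENNReal.ofReal (1/((n:ℝ)+1)) = 0 := by
      have hanti : Antitone (fun n : ℕ => ENNReal.ofReal (1/((n:ℝ)+1))) := by
        intro n m h
        refine ENNReal.ofReal_le_ofReal (one_div_le_one_div_of_le (by positivity) ?_)
        have := (Nat.cast_le (α := ℝ)).mpr h
        linarith
      have := tendsto_nhds_unique (tendsto_atTop_iInf hanti)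
        (ENNReal.tendsto_ofReal tendsto_one_div_add_atTop_nhds_zero_nat)
      simpa using this
    have hIic0 : Iic (0:ℝ≥0∞) = ⋂ n : ℕ, Iic (ENNReal.ofReal (1/((n:ℝ)+1))) := by
      ext b
      simp only [mem_Iic, mem_iInter, le_zero_iff]
      constructor
      · intro h n; simp [h]
      · intro h
        have := le_iInf h
        rwa [hinf0, le_zero_iff] at this
    have hanti2 : Antitone (fun n : ℕ => Iic (ENNReal.ofReal (1/((n:ℝ)+1)))) := by
      intro n m h
      refine Iic_subset_Iic.mpr (ENNReal.ofReal_le_ofReal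
        (one_div_le_one_div_of_le (by positivity) ?_))
      have := (Nat.cast_le (α := ℝ)).mpr h
      linarith
    have e1 : (Measure.map Ycx P) (Iic (0:ℝ≥0∞))
        = ⨅ n : ℕ, (Measure.map Ycx P) (Iic (ENNReal.ofReal (1/((n:ℝ)+1)))) := by
      rw [h0a] at *
      rw [hIic0]
      exact Directed.measure_iInter (fun n => measurableSet_Iic.nullMeasurableSet)
        hanti2.directed_ge ⟨0, measure_ne_top _ _⟩
    have e2 : (Measure.map (fun ω => (Yxc ω)⁻¹) P) (Iic (0:ℝ≥0∞))
        = ⨅ n : ℕ, (Measure.map (fun ω => (Yxc ω)⁻¹) P)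
            (Iic (ENNReal.ofReal (1/((n:ℝ)+1)))) := by
      rw [hIic0]
      exact Directed.measure_iInter (fun n => measurableSet_Iic.nullMeasurableSet)
        hanti2.directed_ge ⟨0, measure_ne_top _ _⟩
    rw [h0a, e1, e2]
    exact iInf_congr (fun n => main (1/((n:ℝ)+1)) (by positivity))
  · have hpos : 0 < a.toReal := ENNReal.toReal_pos h0a hta
    have := main a.toReal hpos
    rwa [ENNReal.ofReal_toReal hta] at this
end

section
/- Let σ > 0, μ ∈ ℝ, s₀ > 0, and let S_t = s₀ exp(σB_t + (μ − σ²/2)t) be geometric Brownian motion. Then S is d-increasing on [s₀,∞) (i.e. P(S_t ≥ s) is increasing in t > 0 for each s ≥ s₀) if and only if μ ≥ σ²/2. -/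
open MeasureTheory ProbabilityTheory Set
open scoped NNReal

/-- Scaling a standard gaussian: the upper tail of `N(0,t)` equals the upper tail of
`N(0,1)` with threshold divided by `√t`. -/
lemma gauss_Ici_scale {t : ℝ} (ht : 0 < t) (c : ℝ) :
    gaussianReal 0 (Real.toNNReal t) (Ici c) =
      gaussianReal 0 1 (Ici (c / Real.sqrt t)) := by
  have hst : 0 < Real.sqrt t := Real.sqrt_pos.2 ht
  have hmap : (gaussianReal 0 1).map (Real.sqrt t * ·) = gaussianReal 0 (Real.toNNReal t) := by
    rw [gaussianReal_map_const_mul]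
    congr 1
    · simp
    · ext
      simp [Real.sq_sqrt ht.le, ht.le]
  rw [← hmap, Measure.map_apply (measurable_const_mul _) measurableSet_Ici]
  congr 1
  ext x
  simp only [Set.mem_preimage, Set.mem_Ici]
  rw [div_le_iff₀' hst]

/-- The probability that GBM at time `t > 0` exceeds `s > 0`, expressed as a standard
gaussian upper tail. -/
lemma gbm_prob_eq {Ω : Type*} [MeasurableSpace Ω] (P : Measure Ω)
    (B : ℝ → Ω → ℝ) (hmB : ∀ t, Measurable (B t))
    (hB : ∀ t > (0 : ℝ), Measure.map (B t) P = gaussianReal 0 (Real.toNNReal t))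
    (σ m s₀ : ℝ) (hσ : 0 < σ) (hs₀ : 0 < s₀) {s : ℝ} (hs : 0 < s)
    {t : ℝ} (ht : 0 < t) :
    P {ω | s ≤ s₀ * Real.exp (σ * B t ω + m * t)} =
      gaussianReal 0 1
        (Ici ((Real.log s - Real.log s₀ - m * t) / (σ * Real.sqrt t))) := by
  have hset : {ω | s ≤ s₀ * Real.exp (σ * B t ω + m * t)} =
      (B t) ⁻¹' Ici ((Real.log s - Real.log s₀ - m * t) / σ) := by
    ext ω
    simp only [Set.mem_setOf_eq, Set.mem_preimage, Set.mem_Ici]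
    rw [← div_le_iff₀' hs₀, ← Real.log_le_iff_le_exp (div_pos hs hs₀),
      Real.log_div hs.ne' hs₀.ne', div_le_iff₀' hσ]
    constructor <;> intro h <;> linarith
  rw [hset, ← Measure.map_apply (hmB t) measurableSet_Ici, hB t ht,
    gauss_Ici_scale ht, div_div]

/-- Positivity of the standard gaussian measure of a nonempty open interval. -/
lemma gauss_Ioo_pos {a b : ℝ} (hab : a < b) : 0 < gaussianReal 0 1 (Ioo a b) := by
  rw [gaussianReal_apply 0 one_ne_zero, setLIntegral_pos_iff (measurable_gaussianPDF 0 1)]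
  have hsupp : Function.support (gaussianPDF 0 1) = Set.univ := by
    ext x
    simp [Function.mem_support, (gaussianPDF_pos 0 one_ne_zero x).ne']
  rw [hsupp, Set.univ_inter, Real.volume_Ioo]
  simp [hab]

/-- Geometric Brownian motion `S_t = s₀ exp(σB_t + (μ - σ²/2)t)` is d-increasing on
`[s₀,∞)` if and only if `μ ≥ σ²/2`. -/
theorem gbm_d_increasing_iff
    {Ω : Type*} [MeasurableSpace Ω] (P : Measure Ω) [IsProbabilityMeasure P]
    (B : ℝ → Ω → ℝ) (hmB : ∀ t, Measurable (B t))
    (hB : ∀ t > (0 : ℝ), Measure.map (B t) P = gaussianReal 0 (Real.toNNReal t))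
    (σ μ s₀ : ℝ) (hσ : 0 < σ) (hs₀ : 0 < s₀) :
    (∀ s ≥ s₀, MonotoneOn
      (fun t => P {ω | s ≤ s₀ * Real.exp (σ * B t ω + (μ - σ ^ 2 / 2) * t)})
      (Ioi (0 : ℝ))) ↔ σ ^ 2 / 2 ≤ μ := by
  set m : ℝ := μ - σ ^ 2 / 2 with hm
  constructor
  · intro h
    by_contra hμ
    push_neg at hμ
    have hmneg : m < 0 := by simp [hm]; linarith
    set c : ℝ := -m / σ with hc
    have hcpos : 0 < c := div_pos (by linarith) hσ
    have h1 : (1 : ℝ) ∈ Ioi (0 : ℝ) := by norm_num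
    have h4 : (4 : ℝ) ∈ Ioi (0 : ℝ) := by norm_num
    have hmono := h s₀ le_rfl h1 h4 (by norm_num)
    have hsq4 : Real.sqrt 4 = 2 := by
      rw [show (4 : ℝ) = 2 ^ 2 by norm_num, Real.sqrt_sq (by norm_num : (0:ℝ) ≤ 2)]
    have e1 : P {ω | s₀ ≤ s₀ * Real.exp (σ * B 1 ω + m * 1)} =
        gaussianReal 0 1 (Ici c) := by
      rw [gbm_prob_eq P B hmB hB σ m s₀ hσ hs₀ hs₀ (by norm_num : (0:ℝ) < 1)]
      congr 1
      rw [Real.sqrt_one, mul_one, mul_one, sub_self, zero_sub, neg_div, hc, neg_div]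
    have e4 : P {ω | s₀ ≤ s₀ * Real.exp (σ * B 4 ω + m * 4)} =
        gaussianReal 0 1 (Ici (2 * c)) := by
      rw [gbm_prob_eq P B hmB hB σ m s₀ hσ hs₀ hs₀ (by norm_num : (0:ℝ) < 4)]
      congr 1
      rw [hsq4, hc]
      field_simp
      ring
    simp only at hmono
    rw [e1, e4] at hmono
    have hsplit : (Ici c : Set ℝ) = Ico c (2 * c) ∪ Ici (2 * c) :=
      (Ico_union_Ici_eq_Ici (by linarith)).symm
    have hdisj : Disjoint (Ico c (2 * c)) (Ici (2 * c) : Set ℝ) := by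
      rw [Set.disjoint_left]
      intro x hx hx'
      exact absurd (hx.2) (not_lt.2 hx')
    have hIci : gaussianReal 0 1 (Ici c) =
        gaussianReal 0 1 (Ico c (2 * c)) + gaussianReal 0 1 (Ici (2 * c)) := by
      rw [hsplit, measure_union hdisj measurableSet_Ici]
    have hpos : 0 < gaussianReal 0 1 (Ico c (2 * c)) :=
      lt_of_lt_of_le (gauss_Ioo_pos (by linarith : c < 2 * c))
        (measure_mono Ioo_subset_Ico_self)
    have hlt : gaussianReal 0 1 (Ici (2 * c)) < gaussianReal 0 1 (Ici c) := by
      rw [hIci, add_comm]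
      exact ENNReal.lt_add_right (measure_ne_top _ _) hpos.ne'
    exact absurd hmono (not_le.2 hlt)
  · intro hμ s hs t₁ ht₁ t₂ ht₂ h12
    have hmnn : 0 ≤ m := by simp [hm]; linarith
    have ht₁' : (0 : ℝ) < t₁ := ht₁
    have ht₂' : (0 : ℝ) < t₂ := ht₂
    have hspos : 0 < s := lt_of_lt_of_le hs₀ hs
    simp only
    rw [gbm_prob_eq P B hmB hB σ m s₀ hσ hs₀ hspos ht₁',
      gbm_prob_eq P B hmB hB σ m s₀ hσ hs₀ hspos ht₂']
    apply measure_mono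
    apply Ici_subset_Ici.2
    set a : ℝ := Real.log s - Real.log s₀ with ha
    have hann : 0 ≤ a := sub_nonneg.2 (Real.log_le_log hs₀ hs)
    set u : ℝ := Real.sqrt t₁ with hu
    set v : ℝ := Real.sqrt t₂ with hv
    have hupos : 0 < u := Real.sqrt_pos.2 ht₁'
    have hvpos : 0 < v := Real.sqrt_pos.2 ht₂'
    have huv : u ≤ v := Real.sqrt_le_sqrt h12
    have hu2 : u * u = t₁ := Real.mul_self_sqrt ht₁'.le
    have hv2 : v * v = t₂ := Real.mul_self_sqrt ht₂'.le
    rw [div_le_div_iff₀ (mul_pos hσ hvpos) (mul_pos hσ hupos)]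
    rw [← hu2, ← hv2]
    nlinarith [mul_nonneg hmnn (mul_nonneg hupos.le hvpos.le),
      mul_nonneg hann (sub_nonneg.2 huv), sub_nonneg.2 huv,
      mul_nonneg (mul_nonneg hmnn (mul_nonneg hupos.le hvpos.le)) (sub_nonneg.2 huv)]
end

section
/- For α ≥ 0 and c ≥ 0, the Brownian motion with power drift R^{(c,α)}_t = B_t + c t^α (with c > 0) is d-increasing on [0,∞) if and only if α ≥ 1/2. -/
open MeasureTheory ProbabilityTheory Set

noncomputable def stdTail (a : ℝ) : ENNReal := gaussianReal 0 1 (Ici a)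

lemma stdTail_anti : Antitone stdTail := fun a b hab =>
  measure_mono (Ici_subset_Ici.mpr hab)

lemma stdTail_strictAnti {a b : ℝ} (hab : a < b) : stdTail b < stdTail a := by
  have hpos : 0 < gaussianReal 0 1 (Ico a b) := by
    by_contra h
    push_neg at h
    have h0 : gaussianReal 0 1 (Ico a b) = 0 := le_antisymm h zero_le
    have := gaussianReal_absolutelyContinuous' (0 : ℝ) (v := 1) one_ne_zero h0
    rw [Real.volume_Ico] at this
    simp only [ENNReal.ofReal_eq_zero] at this
    linarith
  have hsplit : gaussianReal 0 1 (Ici a) = gaussianReal 0 1 (Ico a b) + gaussianReal 0 1 (Ici b) := by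
    rw [← measure_union ?_ measurableSet_Ici, Ico_union_Ici_eq_Ici hab.le]
    rw [Set.disjoint_left]
    exact fun x hx hx2 => absurd hx.2 (not_lt.mpr hx2)
  show gaussianReal 0 1 (Ici b) < gaussianReal 0 1 (Ici a)
  rw [hsplit, add_comm]
  exact ENNReal.lt_add_right (measure_ne_top _ _) hpos.ne'

lemma gauss_Ici (t : ℝ) (ht : 0 < t) (a : ℝ) :
    gaussianReal 0 (Real.toNNReal t) (Ici a) = stdTail (a / Real.sqrt t) := by
  have hsq : Real.sqrt t ^ 2 = t := Real.sq_sqrt ht.le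
  have hmap : (gaussianReal (0:ℝ) 1).map (Real.sqrt t * ·) = gaussianReal 0 (Real.toNNReal t) := by
    rw [gaussianReal_map_const_mul]
    congr 1
    · ring
    · ext
      simp [hsq, Real.coe_toNNReal _ ht.le]
  rw [← hmap, Measure.map_apply (measurable_const_mul _) measurableSet_Ici]
  have hst : 0 < Real.sqrt t := Real.sqrt_pos.mpr ht
  have : (Real.sqrt t * ·) ⁻¹' Ici a = Ici (a / Real.sqrt t) := by
    ext x
    simp [mem_preimage, mem_Ici, le_div_iff₀ hst, div_le_iff₀ hst, mul_comm]
  rw [this]; rfl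

/-- Brownian motion with power drift `R_t = B_t + c t^α` (with `c > 0`, `α ≥ 0`) is
d-increasing on `[0,∞)` if and only if `α ≥ 1/2`. -/
theorem bm_power_drift_d_increasing_iff
    {Ω : Type*} [MeasurableSpace Ω] (P : Measure Ω) [IsProbabilityMeasure P]
    (B : ℝ → Ω → ℝ) (hmB : ∀ t, Measurable (B t))
    (hB : ∀ t > (0 : ℝ), Measure.map (B t) P = gaussianReal 0 (Real.toNNReal t))
    (α c : ℝ) (hα : 0 ≤ α) (hc : 0 < c) :
    (∀ x ≥ (0 : ℝ),
      MonotoneOn (fun t => P {ω | x ≤ B t ω + c * t ^ α}) (Ioi (0 : ℝ))) ↔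
    1 / 2 ≤ α := by
  have key : ∀ x : ℝ, ∀ t > (0:ℝ),
      P {ω | x ≤ B t ω + c * t ^ α} = stdTail ((x - c * t ^ α) / Real.sqrt t) := by
    intro x t ht
    have hset : {ω | x ≤ B t ω + c * t ^ α} = (B t) ⁻¹' (Ici (x - c * t ^ α)) := by
      ext ω
      simp only [mem_setOf_eq, mem_preimage, mem_Ici]
      constructor <;> intro h <;> linarith
    rw [hset, ← Measure.map_apply (hmB t) measurableSet_Ici, hB t ht, gauss_Ici t ht]
  -- the relevant real quantity
  have hval : ∀ t > (0:ℝ), ∀ x : ℝ,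
      (x - c * t ^ α) / Real.sqrt t = x / Real.sqrt t - c * t ^ (α - 1/2) := by
    intro t ht x
    have hst : Real.sqrt t ≠ 0 := (Real.sqrt_pos.mpr ht).ne'
    rw [Real.rpow_sub ht, ← Real.sqrt_eq_rpow]
    field_simp
  constructor
  · intro h
    by_contra hlt
    push_neg at hlt
    have h1 : (1:ℝ) ∈ Ioi (0:ℝ) := by norm_num
    have h2 : (2:ℝ) ∈ Ioi (0:ℝ) := by norm_num
    have hm := h 0 le_rfl h1 h2 (by norm_num)
    dsimp only at hm
    rw [key 0 1 one_pos, key 0 2 two_pos] at hm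
    have e1 : ((0:ℝ) - c * 1 ^ α) / Real.sqrt 1 = -c := by
      simp [Real.one_rpow]
    have e2 : ((0:ℝ) - c * 2 ^ α) / Real.sqrt 2 = -(c * 2 ^ (α - 1/2)) := by
      rw [hval 2 two_pos 0]; ring
    rw [e1, e2] at hm
    have hrp : (2:ℝ) ^ (α - 1/2) < 1 :=
      Real.rpow_lt_one_of_one_lt_of_neg one_lt_two (by linarith)
    have hab : -c < -(c * 2 ^ (α - 1/2)) := by nlinarith
    exact absurd hm (not_le.mpr (stdTail_strictAnti hab))
  · intro hα2 x hx
    intro s hs t ht hst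
    simp only [mem_Ioi] at hs ht
    dsimp only
    rw [key x s hs, key x t ht]
    refine stdTail_anti ?_
    rw [hval s hs x, hval t ht x]
    have h1 : x / Real.sqrt t ≤ x / Real.sqrt s :=
      div_le_div_of_nonneg_left hx (Real.sqrt_pos.mpr hs) (Real.sqrt_le_sqrt hst)
    have h2 : c * s ^ (α - 1/2) ≤ c * t ^ (α - 1/2) :=
      mul_le_mul_of_nonneg_left (Real.rpow_le_rpow hs.le hst (by linarith)) hc.le
    linarith
end

section
/- Let ρ(t)/√t be increasing on (0,∞) (ρ right-continuous, nonnegative), φ₁, φ₂ : (0,∞) → (0,∞) measurable. Suppose that for some family (g_x) of limits: for all x ≥ 0 and all t in a dense subset of (0,∞), φ₁(λ)ρ(λt)/√(λt) − φ₂(λ)x/√(λt) → g_x(t) ∈ [−∞,∞] as λ → 0+, with g_x increasing in t. If g₀(t₀), g₀(t₁) ∈ (0,∞) for two points t₀ < t₁ of a set of positive Lebesgue measure, then there exist α ≥ 1/2 and c ∈ (0,∞) with g₀(t) = c t^{α−1/2} for all t > 0, and moreover ρ(λt)/ρ(λ) → t^α and ρ(λ)φ₁(λ)/√λ → c as λ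 → 0+. -/
open MeasureTheory Set Filter

/-- A monotone multiplicative positive function on a multiplicatively closed,
inversion-closed subset of `(0,∞)` that is "dense" there is a power function. -/
lemma mono_mult_power (ψ : ℝ → ℝ) (T : Set ℝ)
    (hTpos : T ⊆ Ioi 0) (hT1 : (1:ℝ) ∈ T)
    (hmul : ∀ u ∈ T, ∀ v ∈ T, u * v ∈ T ∧ ψ (u*v) = ψ u * ψ v)
    (hinv : ∀ u ∈ T, u⁻¹ ∈ T)
    (hpos : ∀ u ∈ T, 0 < ψ u)
    (hmono : ∀ u ∈ T, ∀ v ∈ T, u ≤ v → ψ u ≤ ψ v)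
    (hdense : ∀ a b : ℝ, 0 < a → a < b → (T ∩ Ioo a b).Nonempty) :
    ∃ β : ℝ, 0 ≤ β ∧ ∀ u ∈ T, ψ u = u ^ β := by
  have hψ1 : ψ 1 = 1 := by
    have h := (hmul 1 hT1 1 hT1).2
    rw [mul_one] at h
    have := hpos 1 hT1
    nlinarith
  -- powers
  have hpow : ∀ n : ℕ, ∀ u ∈ T, u ^ n ∈ T ∧ ψ (u ^ n) = ψ u ^ n := by
    intro n
    induction n with
    | zero => intro u hu; exact ⟨by simpa using hT1, by simp [hψ1]⟩
    | succ n ih =>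
      intro u hu
      obtain ⟨h1, h2⟩ := ih u hu
      obtain ⟨h3, h4⟩ := hmul _ h1 u hu
      constructor
      · simpa [pow_succ] using h3
      · rw [pow_succ, h4, h2, pow_succ]
  -- the ratio lemma
  have key : ∀ u ∈ T, ∀ v ∈ T, 1 < u → 1 < v →
      Real.log (ψ u) / Real.log u ≤ Real.log (ψ v) / Real.log v := by
    intro u hu v hv hu1 hv1
    set x := Real.log u with hx
    set y := Real.log v with hy
    set A := Real.log (ψ u) with hA
    set B := Real.log (ψ v) with hB
    have hx0 : 0 < x := Real.log_pos hu1
    have hy0 : 0 < y := Real.log_pos hv1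
    have hA0 : 0 ≤ A := Real.log_nonneg (by
      have := hmono 1 hT1 u hu hu1.le; rwa [hψ1] at this)
    have hB0 : 0 ≤ B := Real.log_nonneg (by
      have := hmono 1 hT1 v hv hv1.le; rwa [hψ1] at this)
    have hu0 : (0:ℝ) < u := hTpos hu
    have hv0 : (0:ℝ) < v := hTpos hv
    have keynm : ∀ n m : ℕ, (n:ℝ) * x ≤ (m:ℝ) * y → (n:ℝ) * A ≤ (m:ℝ) * B := by
      intro n m hnm
      have hun : u ^ n ≤ v ^ m := by
        rw [← Real.log_le_log_iff (pow_pos hu0 n) (pow_pos hv0 m), Real.log_pow, Real.log_pow]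
        exact_mod_cast hnm
      have h1 := hmono _ (hpow n u hu).1 _ (hpow m v hv).1 hun
      rw [(hpow n u hu).2, (hpow m v hv).2] at h1
      have h2 := Real.log_le_log_iff (pow_pos (hpos u hu) n) (pow_pos (hpos v hv) m) |>.2 h1
      rwa [Real.log_pow, Real.log_pow] at h2
    -- A / x ≤ B / y
    have main : A ≤ (x / y) * B := by
      have step : ∀ ε > (0:ℝ), A ≤ (x / y + ε) * B := by
        intro ε hε
        obtain ⟨q, hq1, hq2⟩ := exists_rat_btwn (show x/y < x/y + ε by linarith)
        have hq0 : (0:ℝ) < (q:ℝ) := lt_trans (div_pos hx0 hy0) hq1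
        have hqq : (0:ℚ) < q := by exact_mod_cast hq0
        set n := q.den with hn
        set m := q.num.toNat with hm
        have hn0 : 0 < (n:ℝ) := by exact_mod_cast q.pos
        have hmq : (m : ℝ) = (q.num : ℝ) := by
          rw [hm]; exact_mod_cast Int.toNat_of_nonneg (le_of_lt (Rat.num_pos.2 hqq))
        have hqmn : (q:ℝ) = (m:ℝ) / (n:ℝ) := by
          rw [Rat.cast_def, hmq]
        have h1 : (n:ℝ) * x ≤ (m:ℝ) * y := by
          have : x / y < (m:ℝ)/(n:ℝ) := by rwa [hqmn] at hq1
          rw [div_lt_div_iff₀ hy0 hn0] at this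
          nlinarith
        have h2 := keynm n m h1
        have : A ≤ ((m:ℝ)/(n:ℝ)) * B := by
          rw [div_mul_eq_mul_div, le_div_iff₀ hn0]
          nlinarith
        calc A ≤ ((m:ℝ)/(n:ℝ)) * B := this
          _ = (q:ℝ) * B := by rw [hqmn]
          _ ≤ (x/y + ε) * B := by nlinarith
      rcases eq_or_lt_of_le hB0 with hB0' | hB0'
      · have := step 1 one_pos
        rw [← hB0'] at this ⊢
        linarith
      · refine le_of_forall_pos_le_add ?_
        intro ε hε
        have := step (ε / B) (div_pos hε hB0')
        calc A ≤ (x/y + ε/B) * B := this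
          _ = (x/y) * B + ε := by rw [add_mul, div_mul_cancel₀ _ hB0'.ne']
    rw [div_le_div_iff₀ hx0 hy0]
    calc A * y ≤ ((x/y) * B) * y := by nlinarith
      _ = B * x := by field_simp
  have hinvψ : ∀ u ∈ T, ψ u⁻¹ = (ψ u)⁻¹ := by
    intro u hu
    have hu0 : (0:ℝ) < u := hTpos hu
    have h := (hmul u hu u⁻¹ (hinv u hu)).2
    rw [mul_inv_cancel₀ hu0.ne', hψ1] at h
    exact eq_inv_of_mul_eq_one_left (by rw [mul_comm]; exact h.symm)
  -- pick u* > 1 in T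
  obtain ⟨u₀, hu₀T, hu₀m⟩ := hdense 1 2 one_pos one_lt_two
  have hu₀1 : 1 < u₀ := hu₀m.1
  set β := Real.log (ψ u₀) / Real.log u₀ with hβ
  have hβ0 : 0 ≤ β := div_nonneg (Real.log_nonneg (by
      have := hmono 1 hT1 u₀ hu₀T hu₀1.le; rwa [hψ1] at this)) (Real.log_nonneg hu₀1.le)
  refine ⟨β, hβ0, ?_⟩
  have main : ∀ u ∈ T, 1 < u → ψ u = u ^ β := by
    intro u hu hu1
    have h1 := key u hu u₀ hu₀T hu1 hu₀1
    have h2 := key u₀ hu₀T u hu hu₀1 hu1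
    have heq : Real.log (ψ u) / Real.log u = β := le_antisymm h1 h2
    have hx0 : 0 < Real.log u := Real.log_pos hu1
    have : Real.log (ψ u) = β * Real.log u := by
      field_simp at heq; linarith [heq]
    rw [Real.rpow_def_of_pos (lt_trans one_pos hu1), mul_comm, ← this,
      Real.exp_log (hpos u hu)]
  intro u hu
  have hu0 : (0:ℝ) < u := hTpos hu
  rcases lt_trichotomy u 1 with h | h | h
  · have h1 : 1 < u⁻¹ := by
      rw [lt_inv_comm₀ one_pos hu0]; simpa using h
    have h2 := main u⁻¹ (hinv u hu) h1
    rw [hinvψ u hu, Real.inv_rpow hu0.le] at h2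
    have := inv_injective h2
    simpa using this
  · rw [h, hψ1, Real.one_rpow]
  · exact main u hu h

/-- Core of the converse scaling-limit theorem (Theorem 4, case (iii)): if the
normalized drifts converge to increasing limits `g_x(t)` on a dense set, and `g₀`
takes finite positive values at two points of a set of positive Lebesgue measure,
then `g₀(t) = c t^{α-1/2}` for some `α ≥ 1/2`, `c > 0`, and the regular-variation
conditions `ρ(λt)/ρ(λ) → t^α`, `ρ(λ)φ₁(λ)/√λ → c` hold. -/
theorem converse_scaling_limit_regular_variation
    (ρ : ℝ → ℝ) (hρ_nonneg : ∀ t ≥ (0 : ℝ), 0 ≤ ρ t)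
    (hρ_rc : ∀ t ≥ (0 : ℝ), ContinuousWithinAt ρ (Ici t) t)
    (hρ_mono : MonotoneOn (fun t => ρ t / Real.sqrt t) (Ioi (0 : ℝ)))
    (φ₁ φ₂ : ℝ → ℝ) (hmφ₁ : Measurable φ₁) (hmφ₂ : Measurable φ₂)
    (hφ₁_pos : ∀ l > (0 : ℝ), 0 < φ₁ l) (hφ₂_pos : ∀ l > (0 : ℝ), 0 < φ₂ l)
    (D : Set ℝ) (hD : D ⊆ Ioi 0) (hDdense : Ioi (0 : ℝ) ⊆ closure D)
    (g : ℝ → ℝ → EReal)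
    (hconv : ∀ x ≥ (0 : ℝ), ∀ t ∈ D,
      Tendsto (fun l => (((φ₁ l * ρ (l * t) - φ₂ l * x) / Real.sqrt (l * t) : ℝ) : EReal))
        (nhdsWithin 0 (Ioi 0)) (nhds (g x t)))
    (hg_mono : ∀ x ≥ (0 : ℝ), MonotoneOn (g x) (Ioi 0))
    (t₀ t₁ : ℝ) (ht₀ : t₀ ∈ D) (ht₁ : t₁ ∈ D) (h01 : 0 < t₀) (h02 : t₀ < t₁)
    (hg₀ : (0 : EReal) < g 0 t₀ ∧ g 0 t₀ ≤ g 0 t₁ ∧ g 0 t₁ < ⊤)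
    (hmeas : 0 < volume (D ∩ Icc t₀ t₁)) :
    ∃ α ≥ (1 / 2 : ℝ), ∃ c > (0 : ℝ),
      (∀ t > (0 : ℝ), g 0 t = ((c * t ^ (α - 1 / 2) : ℝ) : EReal)) ∧
      (∀ t > (0 : ℝ), Tendsto (fun l => ρ (l * t) / ρ l)
        (nhdsWithin 0 (Ioi 0)) (nhds (t ^ α))) ∧
      Tendsto (fun l => ρ l * φ₁ l / Real.sqrt l) (nhdsWithin 0 (Ioi 0)) (nhds c) := by
  classical
  obtain ⟨hg₀pos, hg₀le, hg₀top⟩ := hg₀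
  set l0 := nhdsWithin (0:ℝ) (Ioi 0) with hl0
  set h : ℝ → ℝ := fun t => ρ t / Real.sqrt t with hh
  set E : Set ℝ := D ∩ Icc t₀ t₁ with hE
  have hEsub : E ⊆ Ioi 0 := fun s hs => hD hs.1
  haveI l0ne : l0.NeBot := by rw [hl0]; infer_instance
  have hIoi : ∀ᶠ l in l0, 0 < l := by
    rw [hl0]; filter_upwards [self_mem_nhdsWithin] with l hl; exact hl
  have hscale : ∀ s : ℝ, 0 < s → Tendsto (fun l => l * s) l0 l0 := by
    intro s hs
    rw [hl0]
    apply tendsto_nhdsWithin_of_tendsto_nhds_of_eventually_within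
    · have h1 : Tendsto (fun l : ℝ => l * s) l0 (nhds (0 * s)) :=
        (tendsto_id.mul_const s).mono_left (hl0 ▸ nhdsWithin_le_nhds)
      simpa using h1
    · filter_upwards [hIoi] with l hl; exact mul_pos hl hs
  -- g 0 takes finite positive real values on E
  have hgE : ∀ t ∈ E, ∃ a : ℝ, 0 < a ∧ g 0 t = (a : EReal) := by
    intro t ht
    have ht0 : (0:ℝ) < t := hEsub ht
    have h1 : (0 : EReal) < g 0 t :=
      lt_of_lt_of_le hg₀pos (hg_mono 0 le_rfl (hD ht₀) ht0 ht.2.1)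
    have h2 : g 0 t < ⊤ :=
      lt_of_le_of_lt (hg_mono 0 le_rfl ht0 (hD ht₁) ht.2.2) hg₀top
    have hne_top : g 0 t ≠ ⊤ := h2.ne
    have hne_bot : g 0 t ≠ ⊥ := ne_bot_of_gt h1
    refine ⟨(g 0 t).toReal, ?_, (EReal.coe_toReal hne_top hne_bot).symm⟩
    have := EReal.coe_toReal hne_top hne_bot
    rw [← this] at h1
    exact_mod_cast h1
  -- real convergence on D, given a real value
  have hconv' : ∀ t ∈ D, ∀ a : ℝ, g 0 t = (a : EReal) →
      Tendsto (fun l => φ₁ l * h (l * t)) l0 (nhds a) := by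
    intro t htD a ha
    have H := hconv 0 le_rfl t htD
    rw [ha] at H
    simp only [mul_zero, sub_zero] at H
    have H' := EReal.tendsto_coe.1 H
    apply H'.congr
    intro l
    rw [mul_div_assoc]
  have ht₀E : t₀ ∈ E := ⟨ht₀, le_rfl, h02.le⟩
  obtain ⟨a₀, ha₀pos, ha₀⟩ := hgE t₀ ht₀E
  have hconvt₀ : Tendsto (fun l => φ₁ l * h (l * t₀)) l0 (nhds a₀) := hconv' t₀ ht₀ a₀ ha₀
  -- positivity of h
  have hpos_h : ∀ l > (0:ℝ), 0 < h l := by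
    intro lam hlam
    have hev : ∀ᶠ l in l0, 0 < φ₁ l * h (l * t₀) :=
      hconvt₀.eventually (eventually_gt_nhds ha₀pos)
    have hev2 : ∀ᶠ l in l0, l ∈ Ioo (0:ℝ) (lam / t₀) := by
      rw [hl0]
      exact eventually_of_mem (Ioo_mem_nhdsGT (div_pos hlam h01)) (fun x hx => hx)
    obtain ⟨l, hl1, hl2⟩ := (hev.and hev2).exists
    have hl0' : 0 < l := hl2.1
    have hphi : 0 < φ₁ l := hφ₁_pos l hl0'
    have hhl : 0 < h (l * t₀) := by
      by_contra hc
      push_neg at hc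
      nlinarith
    have hle : l * t₀ ≤ lam := by
      have := hl2.2
      rw [lt_div_iff₀ h01] at this
      exact this.le
    exact lt_of_lt_of_le hhl (hρ_mono (mul_pos hl0' h01) hlam hle)
  set ψ : ℝ → ℝ := fun u => limUnder l0 (fun l => h (l * u) / h l) with hψdef
  set T : Set ℝ := {u | 0 < u ∧ ∃ p : ℝ, 0 < p ∧
      Tendsto (fun l => h (l * u) / h l) l0 (nhds p)} with hTdef
  have hTsub : T ⊆ Ioi 0 := fun u hu => hu.1
  have memT : ∀ u p : ℝ, 0 < u → 0 < p →
      Tendsto (fun l => h (l * u) / h l) l0 (nhds p) → u ∈ T ∧ ψ u = p := by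
    intro u p hu hp htd
    have hval : ψ u = p := htd.limUnder_eq
    exact ⟨⟨hu, p, hp, htd⟩, hval⟩
  have hψT : ∀ u ∈ T, 0 < ψ u ∧ Tendsto (fun l => h (l * u) / h l) l0 (nhds (ψ u)) := by
    rintro u ⟨hu0, p, hp, htd⟩
    have hval : ψ u = p := htd.limUnder_eq
    rw [hval]
    exact ⟨hp, htd⟩
  have hT1 : (1:ℝ) ∈ T := by
    refine (memT 1 1 one_pos one_pos ?_).1
    apply Tendsto.congr' _ (tendsto_const_nhds : Tendsto (fun _ : ℝ => (1:ℝ)) l0 (nhds 1))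
    filter_upwards [hIoi] with l hl
    rw [mul_one, div_self (ne_of_gt (hpos_h l hl))]
  -- E / t₀ ⊆ T
  have hE2T : ∀ s ∈ E, s / t₀ ∈ T := by
    intro s hs
    obtain ⟨as, haspos, has⟩ := hgE s hs
    have hs0 : (0:ℝ) < s := hEsub hs
    have F1 := (hconv' s hs.1 as has).comp (hscale t₀⁻¹ (inv_pos.2 h01))
    have F2 := hconvt₀.comp (hscale t₀⁻¹ (inv_pos.2 h01))
    have F := F1.div F2 (ne_of_gt ha₀pos)
    refine (memT _ _ (div_pos hs0 h01) (div_pos haspos ha₀pos) ?_).1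
    apply Tendsto.congr' _ F
    filter_upwards [hIoi] with l hl
    have hlt : 0 < l * t₀⁻¹ := mul_pos hl (inv_pos.2 h01)
    have hphi : φ₁ (l * t₀⁻¹) ≠ 0 := ne_of_gt (hφ₁_pos _ hlt)
    show φ₁ (l * t₀⁻¹) * h (l * t₀⁻¹ * s) / (φ₁ (l * t₀⁻¹) * h (l * t₀⁻¹ * t₀)) =
      h (l * (s / t₀)) / h l
    rw [mul_div_mul_left _ _ hphi,
      show l * t₀⁻¹ * t₀ = l from by field_simp,
      show l * t₀⁻¹ * s = l * (s / t₀) from by rw [div_eq_mul_inv]; ring]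
  -- closure properties
  have Tmul : ∀ u ∈ T, ∀ v ∈ T, u * v ∈ T ∧ ψ (u * v) = ψ u * ψ v := by
    intro u hu v hv
    obtain ⟨hψu, htu⟩ := hψT u hu
    obtain ⟨hψv, htv⟩ := hψT v hv
    have hu0 := hu.1
    have hv0 := hv.1
    have F := (htu.comp (hscale v hv0)).mul htv
    refine memT _ _ (mul_pos hu0 hv0) (mul_pos hψu hψv) ?_
    apply Tendsto.congr' _ F
    filter_upwards [hIoi] with l hl
    have h1 : h (l * v) ≠ 0 := ne_of_gt (hpos_h _ (mul_pos hl hv0))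
    have h2 : h l ≠ 0 := ne_of_gt (hpos_h _ hl)
    show h (l * v * u) / h (l * v) * (h (l * v) / h l) = h (l * (u * v)) / h l
    rw [show l * v * u = l * (u * v) from by ring]
    field_simp
  have Tinv : ∀ u ∈ T, u⁻¹ ∈ T := by
    intro u hu
    obtain ⟨hψu, htu⟩ := hψT u hu
    have hu0 := hu.1
    have F := (htu.comp (hscale u⁻¹ (inv_pos.2 hu0))).inv₀ (ne_of_gt hψu)
    refine (memT _ _ (inv_pos.2 hu0) (inv_pos.2 hψu) ?_).1
    apply Tendsto.congr' _ F
    filter_upwards [hIoi] with l hl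
    show (h (l * u⁻¹ * u) / h (l * u⁻¹))⁻¹ = h (l * u⁻¹) / h l
    rw [show l * u⁻¹ * u = l from by field_simp, inv_div]
  have monoT : ∀ u ∈ T, ∀ v ∈ T, u ≤ v → ψ u ≤ ψ v := by
    intro u hu v hv huv
    obtain ⟨hψu, htu⟩ := hψT u hu
    obtain ⟨hψv, htv⟩ := hψT v hv
    refine le_of_tendsto_of_tendsto htu htv ?_
    filter_upwards [hIoi] with l hl
    have hlv : (0:ℝ) < l * v := mul_pos hl hv.1
    have hlu : (0:ℝ) < l * u := mul_pos hl hu.1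
    exact (div_le_div_iff_of_pos_right (hpos_h l hl)).2 (hρ_mono hlu hlv
      (mul_le_mul_of_nonneg_left huv hl.le))
  have hψpos : ∀ u ∈ T, 0 < ψ u := fun u hu => (hψT u hu).1
  -- E not countable
  have hEnc : ¬ E.Countable := by
    intro hc
    have := hc.measure_zero volume
    exact absurd this (ne_of_gt hmeas)
  -- subgroup
  set S : AddSubgroup ℝ :=
    { carrier := Real.exp ⁻¹' T
      zero_mem' := by
        show Real.exp 0 ∈ T
        rw [Real.exp_zero]; exact hT1
      add_mem' := by
        intro a b ha hb
        show Real.exp (a + b) ∈ T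
        rw [Real.exp_add]
        exact (Tmul _ ha _ hb).1
      neg_mem' := by
        intro a ha
        show Real.exp (-a) ∈ T
        rw [Real.exp_neg]
        exact Tinv _ ha } with hSdef
  have hdenseT : ∀ a b : ℝ, 0 < a → a < b → (T ∩ Ioo a b).Nonempty := by
    rcases AddSubgroup.dense_or_cyclic S with hd | ⟨x, hx⟩
    · intro a b ha hab
      obtain ⟨z, hzS, hz⟩ := hd.exists_between (Real.log_lt_log ha hab)
      refine ⟨Real.exp z, hzS, ?_, ?_⟩
      · calc a = Real.exp (Real.log a) := (Real.exp_log ha).symm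
          _ < Real.exp z := Real.exp_lt_exp.2 hz.1
      · calc Real.exp z < Real.exp (Real.log b) := Real.exp_lt_exp.2 hz.2
          _ = b := Real.exp_log (ha.trans hab)
    · exfalso
      have hSc : ((S : Set ℝ)).Countable := by
        rw [hx]
        have hsub : ((AddSubgroup.closure {x} : AddSubgroup ℝ) : Set ℝ) ⊆
            Set.range (fun n : ℤ => n • x) := by
          intro y hy
          rw [SetLike.mem_coe, AddSubgroup.mem_closure_singleton] at hy
          obtain ⟨n, hn⟩ := hy
          exact ⟨n, hn⟩
        exact (Set.countable_range _).mono hsub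
      have hTc : T.Countable := by
        have hsub : T ⊆ Real.exp '' (S : Set ℝ) := by
          intro u hu
          exact ⟨Real.log u, show Real.exp (Real.log u) ∈ T from
            (Real.exp_log hu.1).symm ▸ hu, Real.exp_log hu.1⟩
        exact ((hSc.image _)).mono hsub
      apply hEnc
      have hsub : E ⊆ (fun u => u * t₀) '' T := by
        intro s hs
        exact ⟨s / t₀, hE2T s hs, by field_simp⟩
      exact ((hTc.image _)).mono hsub
  obtain ⟨β, hβ0, hψeq⟩ := mono_mult_power ψ T hTsub hT1 Tmul Tinv hψpos monoT hdenseT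
  -- the full limit
  have L : ∀ u : ℝ, 0 < u → Tendsto (fun l => h (l * u) / h l) l0 (nhds (u ^ β)) := by
    intro u hu
    rw [tendsto_order]
    constructor
    · intro b hb
      have hcont : ContinuousAt (fun v : ℝ => v ^ β) u :=
        Real.continuousAt_rpow_const u β (Or.inl hu.ne')
      have hev : ∀ᶠ v in nhds u, b < v ^ β := hcont.eventually (eventually_gt_nhds hb)
      obtain ⟨δ, hδ0, hδ⟩ := Metric.eventually_nhds_iff.1 hev
      have hlt : max (u - δ/2) (u/2) < u := by
        apply max_lt <;> linarith
      obtain ⟨u₁, hu₁T, hu₁m⟩ := hdenseT _ u (lt_max_of_lt_right (by linarith)) hlt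
      have hb1 : b < ψ u₁ := by
        rw [hψeq u₁ hu₁T]
        apply hδ
        rw [Real.dist_eq, abs_lt]
        constructor
        · have := le_max_left (u - δ/2) (u/2)
          have := hu₁m.1
          linarith
        · have := hu₁m.2
          linarith
      have h1 : ∀ᶠ l in l0, b < h (l * u₁) / h l :=
        (hψT u₁ hu₁T).2.eventually (eventually_gt_nhds hb1)
      filter_upwards [h1, hIoi] with l hbl hl
      refine lt_of_lt_of_le hbl ?_
      exact (div_le_div_iff_of_pos_right (hpos_h l hl)).2 (hρ_mono (mul_pos hl (hTsub hu₁T))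
        (mul_pos hl hu) (mul_le_mul_of_nonneg_left hu₁m.2.le hl.le))
    · intro b hb
      have hcont : ContinuousAt (fun v : ℝ => v ^ β) u :=
        Real.continuousAt_rpow_const u β (Or.inl hu.ne')
      have hev : ∀ᶠ v in nhds u, v ^ β < b := hcont.eventually (eventually_lt_nhds hb)
      obtain ⟨δ, hδ0, hδ⟩ := Metric.eventually_nhds_iff.1 hev
      obtain ⟨u₂, hu₂T, hu₂m⟩ := hdenseT u (u + δ/2) hu (by linarith)
      have hb2 : ψ u₂ < b := by
        rw [hψeq u₂ hu₂T]
        apply hδ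
        rw [Real.dist_eq, abs_lt]
        constructor
        · have := hu₂m.1; linarith
        · have := hu₂m.2; linarith
      have h1 : ∀ᶠ l in l0, h (l * u₂) / h l < b :=
        (hψT u₂ hu₂T).2.eventually (eventually_lt_nhds hb2)
      filter_upwards [h1, hIoi] with l hbl hl
      refine lt_of_le_of_lt ?_ hbl
      exact (div_le_div_iff_of_pos_right (hpos_h l hl)).2 (hρ_mono (mul_pos hl hu)
        (mul_pos hl (hTsub hu₂T)) (mul_le_mul_of_nonneg_left hu₂m.1.le hl.le))
  set c : ℝ := a₀ * t₀ ^ (-β) with hcdef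
  have hc : 0 < c := mul_pos ha₀pos (Real.rpow_pos_of_pos h01 _)
  -- limit (iii)
  have Liii : Tendsto (fun l => φ₁ l * h l) l0 (nhds c) := by
    have F := hconvt₀.mul ((L t₀⁻¹ (inv_pos.2 h01)).comp (hscale t₀ h01))
    have e : a₀ * (t₀⁻¹) ^ β = c := by
      rw [hcdef, Real.inv_rpow h01.le, ← Real.rpow_neg h01.le]
    rw [e] at F
    apply Tendsto.congr' _ F
    filter_upwards [hIoi] with l hl
    have h1 : h (l * t₀) ≠ 0 := ne_of_gt (hpos_h _ (mul_pos hl h01))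
    show (φ₁ l * h (l * t₀)) * (h (l * t₀ * t₀⁻¹) / h (l * t₀)) = φ₁ l * h l
    rw [show l * t₀ * t₀⁻¹ = l from by field_simp]
    field_simp
  -- limit (ii)
  have Lii : ∀ t : ℝ, 0 < t →
      Tendsto (fun l => ρ (l * t) / ρ l) l0 (nhds (t ^ (β + 1/2))) := by
    intro t ht
    have F := (L t ht).mul_const (Real.sqrt t)
    have e : t ^ β * Real.sqrt t = t ^ (β + 1/2) := by
      rw [Real.sqrt_eq_rpow, ← Real.rpow_add ht]
    rw [e] at F
    apply Tendsto.congr' _ F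
    filter_upwards [hIoi] with l hl
    have hsl : (0:ℝ) < Real.sqrt l := Real.sqrt_pos.2 hl
    have hst : (0:ℝ) < Real.sqrt t := Real.sqrt_pos.2 ht
    have hρl : 0 < ρ l := by
      have h1 := hpos_h l hl
      rw [hh] at h1
      simp only at h1
      nlinarith [div_mul_cancel₀ (ρ l) (ne_of_gt hsl)]
    show h (l * t) / h l * Real.sqrt t = ρ (l * t) / ρ l
    rw [hh]
    simp only
    rw [Real.sqrt_mul hl.le]
    field_simp
  -- values of g 0 on D
  have LiD : ∀ t ∈ D, g 0 t = ((c * t ^ β : ℝ) : EReal) := by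
    intro t htD
    have ht : 0 < t := hD htD
    have F := hconvt₀.mul ((L (t/t₀) (div_pos ht h01)).comp (hscale t₀ h01))
    have e : a₀ * (t/t₀) ^ β = c * t ^ β := by
      rw [Real.div_rpow ht.le h01.le, hcdef, Real.rpow_neg h01.le]
      field_simp
    rw [e] at F
    have F' : Tendsto (fun l => φ₁ l * h (l * t)) l0 (nhds (c * t ^ β)) := by
      apply Tendsto.congr' _ F
      filter_upwards [hIoi] with l hl
      have h1 : h (l * t₀) ≠ 0 := ne_of_gt (hpos_h _ (mul_pos hl h01))
      show (φ₁ l * h (l * t₀)) * (h (l * t₀ * (t/t₀)) / h (l * t₀)) = φ₁ l * h (l * t)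
      rw [show l * t₀ * (t/t₀) = l * t from by field_simp]
      field_simp
    have hE1 := hconv 0 le_rfl t htD
    have hE2 : Tendsto
        (fun l => (((φ₁ l * ρ (l * t) - φ₂ l * 0) / Real.sqrt (l * t) : ℝ) : EReal))
        l0 (nhds ((c * t ^ β : ℝ) : EReal)) := by
      rw [EReal.tendsto_coe]
      apply F'.congr
      intro l
      simp only [mul_zero, sub_zero, hh]
      rw [mul_div_assoc]
    exact tendsto_nhds_unique hE1 hE2
  -- values of g 0 everywhere
  have LiAll : ∀ t : ℝ, 0 < t → g 0 t = ((c * t ^ β : ℝ) : EReal) := by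
    intro t ht
    have hcont : ContinuousAt (fun v : ℝ => c * v ^ β) t :=
      continuousAt_const.mul (Real.continuousAt_rpow_const t β (Or.inl ht.ne'))
    have gmono := hg_mono 0 le_rfl
    refine le_antisymm ?_ ?_
    · by_contra hlt
      rw [not_le] at hlt
      obtain ⟨r, hr1, hr2⟩ := EReal.lt_iff_exists_real_btwn.1 hlt
      have hrr : c * t ^ β < r := by exact_mod_cast hr1
      have hev : ∀ᶠ v in nhds t, c * v ^ β < r := hcont.eventually (eventually_lt_nhds hrr)
      obtain ⟨δ, hδ0, hδ⟩ := Metric.eventually_nhds_iff.1 hev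
      have hmem : t + δ/2 ∈ closure D := hDdense (by simp only [mem_Ioi]; linarith)
      rw [Metric.mem_closure_iff] at hmem
      obtain ⟨d, hdD, hdd⟩ := hmem (δ/2) (by linarith)
      rw [Real.dist_eq, abs_lt] at hdd
      have htd : t < d := by linarith [hdd.2]
      have hdist : dist d t < δ := by
        rw [Real.dist_eq, abs_lt]
        constructor <;> [linarith [hdd.2]; linarith [hdd.1]]
      have h1 : g 0 t ≤ g 0 d := gmono ht (ht.trans htd) htd.le
      rw [LiD d hdD] at h1
      have h2 : c * d ^ β < r := hδ hdist
      have h3 : g 0 t < (r : EReal) := lt_of_le_of_lt h1 (by exact_mod_cast h2)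
      exact absurd hr2 (not_lt.2 h3.le)
    · by_contra hlt
      rw [not_le] at hlt
      obtain ⟨r, hr1, hr2⟩ := EReal.lt_iff_exists_real_btwn.1 hlt
      have hrr : (r:ℝ) < c * t ^ β := by exact_mod_cast hr2
      have hev : ∀ᶠ v in nhds t, r < c * v ^ β := hcont.eventually (eventually_gt_nhds hrr)
      obtain ⟨δ, hδ0, hδ⟩ := Metric.eventually_nhds_iff.1 hev
      set δ' : ℝ := min δ t with hδ'def
      have hδ'0 : 0 < δ' := lt_min hδ0 ht
      have hδ't : δ' ≤ t := min_le_right _ _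
      have hδ'δ : δ' ≤ δ := min_le_left _ _
      have hmem : t - δ'/2 ∈ closure D := hDdense (by simp only [mem_Ioi]; linarith)
      rw [Metric.mem_closure_iff] at hmem
      obtain ⟨d, hdD, hdd⟩ := hmem (δ'/2) (by linarith)
      rw [Real.dist_eq, abs_lt] at hdd
      have htd : d < t := by linarith [hdd.1]
      have hd0 : 0 < d := by linarith [hdd.2]
      have hdist : dist d t < δ := by
        rw [Real.dist_eq, abs_lt]
        constructor <;> [linarith [hdd.2]; linarith [hdd.1]]
      have h1 : g 0 d ≤ g 0 t := gmono hd0 ht htd.le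
      rw [LiD d hdD] at h1
      have h2 : r < c * d ^ β := hδ hdist
      have h3 : (r : EReal) < g 0 t := lt_of_lt_of_le (by exact_mod_cast h2) h1
      exact absurd hr1 (not_lt.2 h3.le)
  -- conclusion
  refine ⟨β + 1/2, by linarith, c, hc, ?_, ?_, ?_⟩
  · intro t ht
    rw [show β + 1/2 - 1/2 = β from by ring]
    exact LiAll t ht
  · intro t ht
    exact Lii t ht
  · apply Tendsto.congr' _ Liii
    filter_upwards [hIoi] with l hl
    rw [hh]
    simp only
    rw [mul_div_assoc]
    ring
end

section
/- Let g : (0,∞) → [0,∞] be increasing with g(t) ∈ (0,∞) for all t in a measurable set E ⊆ [t₀,t₁] of positive Lebesgue measure (0 < t₀ < t₁), and suppose h : (0,∞) → (0,∞) satisfies h(λt)/h(λ) → (g(t)/g(t₀))·√(t/t₀) as λ → 0+ for all t ∈ E ∪ {t₀}. Then there exists α ∈ ℝ such that (g(t)/g(t₀))·√(t/t₀) = t^α/t₀^α extends to all t > 0 as the limit of h(λt)/h(λ), and if additionally g is increasing then α ≥ 1/2. -/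
open MeasureTheory Set Filter ENNReal Pointwise

namespace RVAux

lemma tendsto_scale {y : ℝ} (hy : 0 < y) :
    Tendsto (fun l : ℝ => l * y) (nhdsWithin 0 (Ioi 0)) (nhdsWithin 0 (Ioi 0)) := by
  apply tendsto_nhdsWithin_of_tendsto_nhds_of_eventually_within
  · have : Tendsto (fun l : ℝ => l * y) (nhds 0) (nhds (0 * y)) :=
      (continuous_id.mul continuous_const).tendsto 0
    rw [zero_mul] at this
    exact this.mono_left nhdsWithin_le_nhds
  · filter_upwards [self_mem_nhdsWithin] with l hl
    exact mul_pos hl hy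

variable {h : ℝ → ℝ}

lemma tendsto_one (hh : ∀ l > (0:ℝ), 0 < h l) :
    Tendsto (fun l => h (l * 1) / h l) (nhdsWithin (0:ℝ) (Ioi 0)) (nhds 1) := by
  have he : ∀ᶠ l in nhdsWithin (0:ℝ) (Ioi 0), (1:ℝ) = h (l * 1) / h l := by
    filter_upwards [self_mem_nhdsWithin] with l hl
    rw [mul_one, div_self (hh l hl).ne']
  exact Tendsto.congr' he tendsto_const_nhds

lemma tendsto_mul (hh : ∀ l > (0:ℝ), 0 < h l) {x y : ℝ} (hx : 0 < x) (hy : 0 < y)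
    {c d : ℝ}
    (Tx : Tendsto (fun l => h (l * x) / h l) (nhdsWithin (0:ℝ) (Ioi 0)) (nhds c))
    (Ty : Tendsto (fun l => h (l * y) / h l) (nhdsWithin (0:ℝ) (Ioi 0)) (nhds d)) :
    Tendsto (fun l => h (l * (x * y)) / h l) (nhdsWithin (0:ℝ) (Ioi 0)) (nhds (c * d)) := by
  have comp : Tendsto (fun l => h ((l * y) * x) / h (l * y))
      (nhdsWithin (0:ℝ) (Ioi 0)) (nhds c) := Tx.comp (tendsto_scale hy)
  have prod := comp.mul Ty
  refine prod.congr' ?_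
  filter_upwards [self_mem_nhdsWithin] with l hl
  have hly : h (l * y) ≠ 0 := (hh _ (mul_pos hl hy)).ne'
  have hl0 : h l ≠ 0 := (hh _ hl).ne'
  have e : l * (x * y) = l * y * x := by ring
  rw [e]
  field_simp

lemma tendsto_inv (hh : ∀ l > (0:ℝ), 0 < h l) {x c : ℝ} (hx : 0 < x) (hc : 0 < c)
    (Tx : Tendsto (fun l => h (l * x) / h l) (nhdsWithin (0:ℝ) (Ioi 0)) (nhds c)) :
    Tendsto (fun l => h (l * x⁻¹) / h l) (nhdsWithin (0:ℝ) (Ioi 0)) (nhds c⁻¹) := by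
  have comp : Tendsto (fun l => h ((l * x⁻¹) * x) / h (l * x⁻¹))
      (nhdsWithin (0:ℝ) (Ioi 0)) (nhds c) := Tx.comp (tendsto_scale (inv_pos.mpr hx))
  have e : ∀ l : ℝ, l * x⁻¹ * x = l := fun l => by field_simp
  have comp' : Tendsto (fun l => h l / h (l * x⁻¹))
      (nhdsWithin (0:ℝ) (Ioi 0)) (nhds c) := by simpa only [e] using comp
  have := comp'.inv₀ hc.ne'
  simpa only [inv_div] using this

/-- The predicate: `x` has a positive limit for `h(l x)/h l`. -/
def SP (h : ℝ → ℝ) (x : ℝ) : Prop :=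
  ∃ c : ℝ, 0 < c ∧ Tendsto (fun l => h (l * x) / h l) (nhdsWithin (0:ℝ) (Ioi 0)) (nhds c)

lemma SP_one (hh : ∀ l > (0:ℝ), 0 < h l) : SP h 1 :=
  ⟨1, one_pos, tendsto_one hh⟩

lemma SP_mul (hh : ∀ l > (0:ℝ), 0 < h l) {x y : ℝ} (hx : 0 < x) (hy : 0 < y)
    (hX : SP h x) (hY : SP h y) : SP h (x * y) := by
  obtain ⟨c, hc, Tx⟩ := hX
  obtain ⟨d, hd, Ty⟩ := hY
  exact ⟨c * d, mul_pos hc hd, tendsto_mul hh hx hy Tx Ty⟩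

lemma SP_inv (hh : ∀ l > (0:ℝ), 0 < h l) {x : ℝ} (hx : 0 < x) (hX : SP h x) :
    SP h x⁻¹ := by
  obtain ⟨c, hc, Tx⟩ := hX
  exact ⟨c⁻¹, inv_pos.mpr hc, tendsto_inv hh hx hc Tx⟩

lemma SP_pow (hh : ∀ l > (0:ℝ), 0 < h l) {x : ℝ} (hx : 0 < x) (hX : SP h x) :
    ∀ n : ℕ, SP h (x ^ n)
  | 0 => by simpa using SP_one hh
  | (n + 1) => by
      rw [pow_succ]
      exact SP_mul hh (pow_pos hx n) hx (SP_pow hh hx hX n) hX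

/-- The limit function. -/
noncomputable def limL (h : ℝ → ℝ) (x : ℝ) : ℝ :=
  limUnder (nhdsWithin (0:ℝ) (Ioi 0)) (fun l => h (l * x) / h l)

end RVAux

open RVAux

/-- Application of the Characterisation Theorem of regular variation
(Bingham–Goldie–Teugels, Thm 1.4.1): if `g` is increasing, finite and positive on a
set `E ⊆ [t₀,t₁]` of positive Lebesgue measure, and
`h(λt)/h(λ) → (g(t)/g(t₀))·√(t/t₀)` as `λ → 0+` for all `t ∈ E ∪ {t₀}`, then there
is `α ≥ 1/2` with `(g(t)/g(t₀))·√(t/t₀) = t^α/t₀^α` on `E ∪ {t₀}`, and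
`h(λt)/h(λ) → t^α/t₀^α` for all `t > 0`. -/
theorem regular_variation_characterisation_application
    (t₀ t₁ : ℝ) (h0 : 0 < t₀) (h01 : t₀ < t₁)
    (g : ℝ → ℝ≥0∞) (hg_mono : MonotoneOn g (Ioi 0))
    (E : Set ℝ) (hE_sub : E ⊆ Icc t₀ t₁) (hE_meas : MeasurableSet E)
    (hE_pos : 0 < volume E)
    (hgE : ∀ t ∈ E, 0 < g t ∧ g t < ∞)
    (hg₀ : 0 < g t₀ ∧ g t₀ < ∞)
    (h : ℝ → ℝ) (hh_pos : ∀ l > (0 : ℝ), 0 < h l)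
    (hconv : ∀ t ∈ insert t₀ E,
      Tendsto (fun l => h (l * t) / h l) (nhdsWithin 0 (Ioi 0))
        (nhds ((g t).toReal / (g t₀).toReal * Real.sqrt (t / t₀)))) :
    ∃ α : ℝ, 1 / 2 ≤ α ∧
      (∀ t ∈ insert t₀ E,
        (g t).toReal / (g t₀).toReal * Real.sqrt (t / t₀) = t ^ α / t₀ ^ α) ∧
      (∀ t > (0 : ℝ), Tendsto (fun l => h (l * t) / h l) (nhdsWithin 0 (Ioi 0))
        (nhds (t ^ α / t₀ ^ α))) := by
  classical
  set ψ : ℝ → ℝ := fun t => (g t).toReal / (g t₀).toReal * Real.sqrt (t / t₀) with hψdef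
  have hg₀pos : 0 < (g t₀).toReal := ENNReal.toReal_pos hg₀.1.ne' hg₀.2.ne
  -- basic positivity facts about ψ on E
  have hEpos' : ∀ t ∈ E, 0 < t := fun t ht => h0.trans_le (hE_sub ht).1
  have hratio_ge : ∀ t ∈ E, 1 ≤ (g t).toReal / (g t₀).toReal := by
    intro t ht
    have hgt : g t₀ ≤ g t :=
      hg_mono (mem_Ioi.mpr h0) (mem_Ioi.mpr (hEpos' t ht)) (hE_sub ht).1
    have : (g t₀).toReal ≤ (g t).toReal :=
      (ENNReal.toReal_le_toReal hg₀.2.ne (hgE t ht).2.ne).mpr hgt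
    exact (one_le_div hg₀pos).mpr this
  have hsqrt_ge : ∀ t ∈ E, 1 ≤ Real.sqrt (t / t₀) := by
    intro t ht
    exact Real.one_le_sqrt.mpr ((one_le_div h0).mpr (hE_sub ht).1)
  have hψ_ge_sqrt : ∀ t ∈ E, Real.sqrt (t / t₀) ≤ ψ t := by
    intro t ht
    have h1 := hratio_ge t ht
    have h2 : 0 ≤ Real.sqrt (t / t₀) := Real.sqrt_nonneg _
    calc Real.sqrt (t / t₀) = 1 * Real.sqrt (t / t₀) := (one_mul _).symm
      _ ≤ (g t).toReal / (g t₀).toReal * Real.sqrt (t / t₀) :=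
          mul_le_mul_of_nonneg_right h1 h2
  have hψ_ge_one : ∀ t ∈ E, 1 ≤ ψ t := fun t ht =>
    le_trans (hsqrt_ge t ht) (hψ_ge_sqrt t ht)
  have hψ_pos : ∀ t ∈ E, 0 < ψ t := fun t ht => lt_of_lt_of_le one_pos (hψ_ge_one t ht)
  have hψt₀ : ψ t₀ = 1 := by
    simp only [hψdef, div_self h0.ne', Real.sqrt_one, mul_one, div_self hg₀pos.ne']
  -- the limit function
  set L : ℝ → ℝ := limL h with hLdef
  have hL_eq_ψ : ∀ t ∈ insert t₀ E, L t = ψ t := fun t ht => (hconv t ht).limUnder_eq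
  have hSP_E : ∀ t ∈ E, SP h t := fun t ht =>
    ⟨ψ t, hψ_pos t ht, hconv t (mem_insert_of_mem _ ht)⟩
  -- a subset of E with bounded g and positive measure
  set clamp : ℝ → ℝ := fun t => min (max t t₀) t₁ with hclampdef
  have hclamp_mono : Monotone fun t => g (clamp t) := by
    intro a b hab
    have hca : t₀ ≤ clamp a := le_min (le_max_right _ _) h01.le
    have hcb : t₀ ≤ clamp b := le_min (le_max_right _ _) h01.le
    exact hg_mono (mem_Ioi.mpr (h0.trans_le hca)) (mem_Ioi.mpr (h0.trans_le hcb))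
      (min_le_min (max_le_max hab le_rfl) le_rfl)
  have hclamp_meas : Measurable fun t => g (clamp t) := hclamp_mono.measurable
  have hclamp_eq : ∀ t ∈ E, clamp t = t := by
    intro t ht
    simp only [hclampdef]
    rw [max_eq_left (hE_sub ht).1, min_eq_left (hE_sub ht).2]
  obtain ⟨n, hE'pos⟩ : ∃ n : ℕ, 0 < volume (E ∩ {t | g (clamp t) ≤ (n : ℝ≥0∞)}) := by
    by_contra hcon
    push_neg at hcon
    have hnull : ∀ n : ℕ, volume (E ∩ {t | g (clamp t) ≤ (n : ℝ≥0∞)}) = 0 :=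
      fun n => le_antisymm (hcon n) zero_le
    have hcover : E ⊆ ⋃ n : ℕ, E ∩ {t | g (clamp t) ≤ (n : ℝ≥0∞)} := by
      intro t ht
      obtain ⟨n, hn⟩ := ENNReal.exists_nat_gt (hgE t ht).2.ne
      exact mem_iUnion.mpr ⟨n, ht, by rw [mem_setOf_eq, hclamp_eq t ht]; exact hn.le⟩
    have : volume E = 0 :=
      measure_mono_null hcover (measure_iUnion_null hnull)
    exact absurd this hE_pos.ne'
  set E' : Set ℝ := E ∩ {t | g (clamp t) ≤ (n : ℝ≥0∞)} with hE'def
  have hE'sub : E' ⊆ E := inter_subset_left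
  have hE'meas : MeasurableSet E' :=
    hE_meas.inter (hclamp_meas measurableSet_Iic)
  set M : ℝ := (n : ℝ) / (g t₀).toReal * Real.sqrt (t₁ / t₀) with hMdef
  have hψ_le : ∀ t ∈ E', ψ t ≤ M := by
    intro t ht
    have htE := hE'sub ht
    have hgn : (g t).toReal ≤ (n : ℝ) := by
      have h1 : g t ≤ (n : ℝ≥0∞) := by
        have := ht.2; rwa [mem_setOf_eq, hclamp_eq t htE] at this
      have := (ENNReal.toReal_le_toReal (hgE t htE).2.ne (by simp)).mpr h1
      simpa using this
    have h1 : (g t).toReal / (g t₀).toReal ≤ (n : ℝ) / (g t₀).toReal := by gcongr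
    have h2 : Real.sqrt (t / t₀) ≤ Real.sqrt (t₁ / t₀) := by
      apply Real.sqrt_le_sqrt
      gcongr
      exact (hE_sub htE).2
    have h3 : 0 ≤ (n : ℝ) / (g t₀).toReal := by positivity
    have h4 : 0 ≤ Real.sqrt (t / t₀) := Real.sqrt_nonneg _
    have h5 : 1 ≤ (g t).toReal / (g t₀).toReal := hratio_ge t htE
    exact mul_le_mul h1 h2 h4 h3
  have hE'ne : E'.Nonempty := nonempty_of_measure_ne_zero hE'pos.ne'
  have hM1 : 1 ≤ M := by
    obtain ⟨t, ht⟩ := hE'ne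
    exact le_trans (hψ_ge_one t (hE'sub ht)) (hψ_le t ht)
  -- the preimage of E' under exp has positive measure
  set A : Set ℝ := Real.exp ⁻¹' E' with hAdef
  have hA_meas : MeasurableSet A := hE'meas.preimage Real.measurable_exp
  have hA_img : Real.exp '' A = E' := by
    ext t
    constructor
    · rintro ⟨u, hu, rfl⟩; exact hu
    · intro ht
      refine ⟨Real.log t, ?_, Real.exp_log (hEpos' t (hE'sub ht))⟩
      simp only [hAdef, mem_preimage, Real.exp_log (hEpos' t (hE'sub ht))]
      exact ht
  have hApos : 0 < volume A := by
    have key := lintegral_image_eq_lintegral_abs_det_fderiv_mul (volume : Measure ℝ)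
      hA_meas (f := Real.exp)
      (f' := fun u => ContinuousLinearMap.smulRight (1 : ℝ →L[ℝ] ℝ) (Real.exp u))
      (fun x _ => (Real.hasDerivAt_exp x).hasFDerivAt.hasFDerivWithinAt)
      (Real.exp_injective.injOn) (fun _ => 1)
    rw [hA_img] at key
    have hdet : ∀ u : ℝ,
        (ContinuousLinearMap.smulRight (1 : ℝ →L[ℝ] ℝ) (Real.exp u)).det = Real.exp u := by
      intro u
      have e : ((ContinuousLinearMap.smulRight (1 : ℝ →L[ℝ] ℝ) (Real.exp u)) : ℝ →ₗ[ℝ] ℝ)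
          = Real.exp u • LinearMap.id := by ext; simp [mul_comm]
      rw [ContinuousLinearMap.det, e, LinearMap.det_smul]
      simp
    have lhs : ∫⁻ x in E', (1 : ℝ≥0∞) = volume E' := setLIntegral_one E'
    have rhs_le : (∫⁻ x in A, ENNReal.ofReal
        |(ContinuousLinearMap.smulRight (1 : ℝ →L[ℝ] ℝ) (Real.exp x)).det| * 1)
        ≤ ENNReal.ofReal t₁ * volume A := by
      have hb : ∀ x ∈ A, ENNReal.ofReal
          |(ContinuousLinearMap.smulRight (1 : ℝ →L[ℝ] ℝ) (Real.exp x)).det| * 1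
          ≤ ENNReal.ofReal t₁ := by
        intro x hx
        rw [hdet x, mul_one, abs_of_pos (Real.exp_pos x)]
        exact ENNReal.ofReal_le_ofReal (hE_sub (hE'sub hx)).2
      calc (∫⁻ x in A, ENNReal.ofReal
          |(ContinuousLinearMap.smulRight (1 : ℝ →L[ℝ] ℝ) (Real.exp x)).det| * 1)
          ≤ ∫⁻ _x in A, ENNReal.ofReal t₁ := by
            apply setLIntegral_mono measurable_const hb
        _ = ENNReal.ofReal t₁ * volume A := setLIntegral_const _ _
    by_contra hcon
    push_neg at hcon
    have hA0 : volume A = 0 := le_antisymm hcon zero_le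
    rw [lhs] at key
    rw [key] at hE'pos
    have := lt_of_lt_of_le hE'pos rhs_le
    rw [hA0, mul_zero] at this
    exact absurd this (lt_irrefl _)
  -- Steinhaus: A - A is a neighbourhood of 0
  have hAA : A - A ∈ nhds (0 : ℝ) :=
    MeasureTheory.Measure.sub_mem_nhds_zero_of_addHaar_pos volume A hA_meas hApos
  obtain ⟨ε, hε, hball⟩ : ∃ ε > 0, Metric.ball (0:ℝ) ε ⊆ A - A :=
    Metric.mem_nhds_iff.mp hAA
  -- SP holds near 0 (on exponentials)
  have hT : ∀ u : ℝ, |u| < ε → SP h (Real.exp u) := by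
    intro u hu
    have : u ∈ A - A := hball (by simpa [Real.dist_eq] using hu)
    obtain ⟨a, ha, b, hb, rfl⟩ := Set.mem_sub.mp this
    have hSa : SP h (Real.exp a) := hSP_E _ (hE'sub ha)
    have hSb : SP h (Real.exp b) := hSP_E _ (hE'sub hb)
    have : SP h (Real.exp a * (Real.exp b)⁻¹) :=
      SP_mul hh_pos (Real.exp_pos a) (inv_pos.mpr (Real.exp_pos b)) hSa
        (SP_inv hh_pos (Real.exp_pos b) hSb)
    rwa [Real.exp_sub, div_eq_mul_inv]
  -- SP holds for all positive reals
  have hSP_all : ∀ x : ℝ, 0 < x → SP h x := by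
    intro x hx
    set u := Real.log x with hudef
    obtain ⟨k, hk⟩ := exists_nat_gt (|u| / ε)
    set m : ℕ := k + 1 with hmdef
    have hm0 : (0:ℝ) < m := by positivity
    have hum : |u / (m:ℝ)| < ε := by
      rw [abs_div, abs_of_pos hm0, div_lt_iff₀ hm0]
      have h1 : |u| / ε < m := lt_of_le_of_lt hk.le (by exact_mod_cast Nat.lt_succ_self k)
      have h2 : |u| < (m:ℝ) * ε := by rwa [div_lt_iff₀ hε] at h1
      linarith [mul_comm ε (m:ℝ)]
    have hSP_u : SP h (Real.exp (u / m)) := hT _ hum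
    have hxpow : x = (Real.exp (u / m)) ^ m := by
      rw [← Real.exp_nat_mul]
      have : (m : ℝ) * (u / m) = u := by field_simp
      rw [this, hudef, Real.exp_log hx]
    rw [hxpow]
    exact SP_pow hh_pos (Real.exp_pos _) hSP_u m
  -- properties of L
  have hLt : ∀ x : ℝ, 0 < x →
      Tendsto (fun l => h (l * x) / h l) (nhdsWithin (0:ℝ) (Ioi 0)) (nhds (L x)) ∧ 0 < L x := by
    intro x hx
    obtain ⟨c, hc, Tx⟩ := hSP_all x hx
    have : L x = c := Tx.limUnder_eq
    rw [this]
    exact ⟨Tx, hc⟩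
  have hLmul : ∀ x y : ℝ, 0 < x → 0 < y → L (x * y) = L x * L y := by
    intro x y hx hy
    exact (tendsto_mul hh_pos hx hy (hLt x hx).1 (hLt y hy).1).limUnder_eq
  -- the additive function f
  set f : ℝ → ℝ := fun u => Real.log (L (Real.exp u)) with hfdef
  have hfadd : ∀ u v : ℝ, f (u + v) = f u + f v := by
    intro u v
    simp only [hfdef]
    rw [Real.exp_add, hLmul _ _ (Real.exp_pos u) (Real.exp_pos v),
      Real.log_mul ((hLt _ (Real.exp_pos u)).2).ne' ((hLt _ (Real.exp_pos v)).2).ne']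
  set F : ℝ →+ ℝ := AddMonoidHom.mk' f hfadd with hFdef
  -- f is bounded on A
  set K : ℝ := Real.log M with hKdef
  have hK0 : 0 ≤ K := Real.log_nonneg hM1
  have hfA : ∀ u ∈ A, 0 ≤ f u ∧ f u ≤ K := by
    intro u hu
    have htE' : Real.exp u ∈ E' := hu
    have htE : Real.exp u ∈ E := hE'sub htE'
    have hLψ : L (Real.exp u) = ψ (Real.exp u) :=
      hL_eq_ψ _ (mem_insert_of_mem _ htE)
    constructor
    · rw [hfdef]; simp only []
      rw [hLψ]
      exact Real.log_nonneg (hψ_ge_one _ htE)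
    · rw [hfdef]; simp only []
      rw [hLψ]
      exact Real.log_le_log (hψ_pos _ htE) (hψ_le _ htE')
  have hfball : ∀ w : ℝ, |w| < ε → |f w| ≤ K := by
    intro w hw
    have : w ∈ A - A := hball (by simpa [Real.dist_eq] using hw)
    obtain ⟨a, ha, b, hb, rfl⟩ := Set.mem_sub.mp this
    have hfab : f (a - b) = f a - f b := map_sub F a b
    obtain ⟨ha1, ha2⟩ := hfA a ha
    obtain ⟨hb1, hb2⟩ := hfA b hb
    rw [hfab, abs_le]
    constructor <;> linarith
  -- continuity of f at 0
  have hcont0 : Tendsto f (nhds (0:ℝ)) (nhds (0:ℝ)) := by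
    rw [Metric.tendsto_nhds_nhds]
    intro δ hδ
    obtain ⟨k, hk⟩ := exists_nat_gt (K / δ)
    set m : ℕ := k + 1 with hmdef
    have hm0 : (0:ℝ) < m := by positivity
    have hKm : K / m < δ := by
      rw [div_lt_iff₀ hm0]
      have h1 : K / δ < m := lt_of_le_of_lt hk.le (by exact_mod_cast Nat.lt_succ_self k)
      calc K = K / δ * δ := by field_simp
        _ < (m:ℝ) * δ := mul_lt_mul_of_pos_right h1 hδ
        _ = δ * m := mul_comm _ _
    refine ⟨ε / m, by positivity, ?_⟩
    intro w hw
    rw [Real.dist_eq, sub_zero] at hw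
    have hsm : f ((m : ℕ) • w) = (m : ℕ) • f w := map_nsmul F m w
    rw [nsmul_eq_mul] at hsm
    have hmw : |(m:ℝ) * w| < ε := by
      rw [abs_mul, abs_of_pos hm0]
      calc (m:ℝ) * |w| < (m:ℝ) * (ε / m) := mul_lt_mul_of_pos_left hw hm0
        _ = ε := by field_simp
    have hb := hfball _ hmw
    rw [hsm] at hb
    have : |f w| ≤ K / m := by
      rw [nsmul_eq_mul, abs_mul, abs_of_pos hm0] at hb
      rw [le_div_iff₀ hm0]
      linarith [hb]
    rw [Real.dist_eq, sub_zero]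
    exact lt_of_le_of_lt this hKm
  have hf0 : f 0 = 0 := map_zero F
  have hcont : Continuous f := by
    rw [continuous_iff_continuousAt]
    intro x
    have heq : ∀ y : ℝ, f y = f x + f (y - x) := by
      intro y
      have := hfadd x (y - x)
      rw [add_sub_cancel] at this
      linarith
    have h1 : Tendsto (fun y : ℝ => y - x) (nhds x) (nhds 0) := by
      have : Tendsto (fun y : ℝ => y - x) (nhds x) (nhds (x - x)) :=
        ((continuous_id.sub continuous_const).tendsto x)
      simpa using this
    have h2 : Tendsto (fun y => f x + f (y - x)) (nhds x) (nhds (f x + 0)) :=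
      tendsto_const_nhds.add (hcont0.comp h1)
    rw [add_zero] at h2
    exact (h2.congr (fun y => (heq y).symm) : ContinuousAt f x)
  -- f is linear
  set α : ℝ := f 1 with hαdef
  have hflin : ∀ u : ℝ, f u = Real.log (Real.exp u) * α := by
    intro u
    have := map_real_smul F hcont u 1
    simp only [smul_eq_mul, mul_one] at this
    rw [Real.log_exp]
    exact this
  have hLpow : ∀ x : ℝ, 0 < x → L x = x ^ α := by
    intro x hx
    have h1 : f (Real.log x) = Real.log (L x) := by
      simp only [hfdef]
      rw [Real.exp_log hx]
    have h2 := hflin (Real.log x)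
    rw [Real.log_exp] at h2
    rw [h1] at h2
    have h3 : L x = Real.exp (Real.log x * α) := by
      rw [← h2, Real.exp_log (hLt x hx).2]
    rw [h3, Real.rpow_def_of_pos hx]
  -- L t₀ = 1 and consequences
  have hLt₀ : L t₀ = 1 := by
    rw [hL_eq_ψ t₀ (mem_insert _ _), hψt₀]
  have ht₀α : t₀ ^ α = 1 := by rw [← hLpow t₀ h0, hLt₀]
  -- find a point of E strictly above t₀
  have hsing : volume (E' \ {t₀}) ≠ 0 := by
    rw [measure_diff_null (measure_singleton t₀)]
    exact hE'pos.ne'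
  obtain ⟨ts, hts⟩ := nonempty_of_measure_ne_zero hsing
  have htsE : ts ∈ E := hE'sub hts.1
  have hts_gt : t₀ < ts := lt_of_le_of_ne (hE_sub htsE).1 (Ne.symm hts.2)
  have hts_pos : 0 < ts := h0.trans hts_gt
  have h_ts : Real.sqrt (ts / t₀) ≤ ts ^ α := by
    have h1 : L ts = ψ ts := hL_eq_ψ _ (mem_insert_of_mem _ htsE)
    rw [← hLpow ts hts_pos, h1]
    exact hψ_ge_sqrt ts htsE
  have h_ts1 : 1 < Real.sqrt (ts / t₀) := by
    have h1 : (1:ℝ) < ts / t₀ := (one_lt_div h0).mpr hts_gt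
    have := Real.sqrt_lt_sqrt zero_le_one h1
    rwa [Real.sqrt_one] at this
  have hαne : α ≠ 0 := by
    intro hα
    rw [hα, Real.rpow_zero] at h_ts
    linarith
  have ht₀1 : t₀ = 1 := by
    rw [Real.rpow_def_of_pos h0] at ht₀α
    rw [Real.exp_eq_one_iff] at ht₀α
    rcases mul_eq_zero.mp ht₀α with hl | hr
    · rcases Real.log_eq_zero.mp hl with h1 | h1 | h1
      · exact absurd h1 h0.ne'
      · exact h1
      · linarith
    · exact absurd hr hαne
  have hαhalf : 1 / 2 ≤ α := by
    have hts1 : 1 < ts := by rw [← ht₀1]; exact hts_gt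
    have h1 : Real.sqrt ts ≤ ts ^ α := by
      have := h_ts
      rw [ht₀1, div_one] at this
      exact this
    rw [Real.sqrt_eq_rpow] at h1
    exact (Real.rpow_le_rpow_left_iff hts1).mp h1
  refine ⟨α, hαhalf, ?_, ?_⟩
  · intro t ht
    have htpos : 0 < t := by
      rcases ht with rfl | htE
      · exact h0
      · exact hEpos' t htE
    have h1 : L t = ψ t := hL_eq_ψ t ht
    show ψ t = t ^ α / t₀ ^ α
    rw [← h1, hLpow t htpos, ht₀α, div_one]
  · intro t htpos
    have := (hLt t htpos).1
    rw [ht₀α, div_one, ← hLpow t htpos]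
    exact this
end
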